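/- arXiv:1912.08729 — 3 statements merged into one kernel-verified Lean document; each statement's English description precedes it below -/
import Mathlib

section
/- For any parity sequence s ∈ S_{m|n}, the finite Cartan matrix A^s = (A^s_{i,j})_{i,j=1}^{N-1} with A^s_{i,j} = (s_i + s_{i+1})δ_{i,j} - s_i δ_{i,j+1} - s_j δ_{i+1,j} satisfies |det A^s| = |m - n|. -/
open Matrix Finset

lemma sumIf {K : ℕ} (f : Fin K → ℤ) (c : ℕ) :
    (∑ k : Fin K, if (k : ℕ) = c then f k else 0)
      = if h : c < K then f ⟨c, h⟩ else 0 := by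
  split_ifs with h
  · rw [Finset.sum_eq_single ⟨c, h⟩]
    · simp
    · intro k _ hk
      exact if_neg fun hc => hk (Fin.ext hc)
    · simp
  · refine Finset.sum_eq_zero fun k _ => if_neg fun hc => ?_
    have := k.isLt; omega

lemma sumIf' {K : ℕ} (f : Fin K → ℤ) (c : ℕ) :
    (∑ k : Fin K, if c = (k : ℕ) + 1 then f k else 0)
      = if h : 1 ≤ c ∧ c - 1 < K then f ⟨c - 1, h.2⟩ else 0 := by
  split_ifs with h
  · rw [Finset.sum_eq_single ⟨c - 1, h.2⟩]
    · rw [if_pos (by simp; omega)]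
    · intro k _ hk
      refine if_neg fun hc => hk (Fin.ext ?_)
      simp only; omega
    · simp
  · refine Finset.sum_eq_zero fun k _ => if_neg fun hc => ?_
    have := k.isLt; omega

section Key
variable (K : ℕ) (t : ℕ → ℤ)

def Pm : Matrix (Fin K) (Fin K) ℤ :=
  Matrix.of fun i j => (if (j : ℕ) = (i : ℕ) then (1 : ℤ) else 0)
    - (if (i : ℕ) = (j : ℕ) + 1 then 1 else 0)

def Cm : Matrix (Fin K) (Fin K) ℤ :=
  Matrix.of fun i j => t 0 + if (i : ℕ) = (j : ℕ) then t ((i : ℕ) + 1) else 0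

lemma hPC (i l : Fin K) : (Pm K * Cm K t) i l
    = Cm K t i l - (if h : 1 ≤ (i : ℕ) ∧ (i : ℕ) - 1 < K
        then Cm K t ⟨(i : ℕ) - 1, h.2⟩ l else 0) := by
  rw [Matrix.mul_apply]
  simp only [Pm, Matrix.of_apply, sub_mul, boole_mul]
  rw [Finset.sum_sub_distrib, sumIf (fun k => Cm K t k l), sumIf' (fun k => Cm K t k l)]
  rw [dif_pos i.isLt]

lemma hPCP (i j : Fin K) : (Pm K * Cm K t * (Pm K)ᵀ) i j
    = (Pm K * Cm K t) i j - (if h : 1 ≤ (j : ℕ) ∧ (j : ℕ) - 1 < K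
        then (Pm K * Cm K t) i ⟨(j : ℕ) - 1, h.2⟩ else 0) := by
  set X := Pm K * Cm K t with hX
  rw [Matrix.mul_apply]
  simp only [Matrix.transpose_apply, Pm, Matrix.of_apply, mul_sub, mul_boole]
  rw [Finset.sum_sub_distrib, sumIf (fun l => X i l), sumIf' (fun l => X i l)]
  rw [dif_pos j.isLt]

lemma factor : (Matrix.of fun i j : Fin K =>
      (t i + t ((i : ℕ) + 1)) * (if i = j then (1 : ℤ) else 0)
        - t i * (if (i : ℕ) = (j : ℕ) + 1 then 1 else 0)
        - t j * (if (i : ℕ) + 1 = (j : ℕ) then 1 else 0))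
    = Pm K * Cm K t * (Pm K)ᵀ := by
  ext i j
  rw [hPCP]
  simp only [hPC]
  simp only [Cm, Matrix.of_apply]
  split_ifs <;> try omega
  all_goals (try ring)
  all_goals (first
    | (rw [show (j : ℕ) = 1 + (i : ℕ) from by omega])
    | (rw [show 1 + ((i : ℕ) - 1) = (i : ℕ) from by omega])
    | (rw [show (i : ℕ) = 0 from by omega]))
  all_goals ring
end Key

lemma detPm : (Pm K).det = 1 := by
  have h : (Pm K).BlockTriangular OrderDual.toDual := by
    intro i j hij
    have : (i : ℕ) < (j : ℕ) := hij
    simp only [Pm, Matrix.of_apply]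
    rw [if_neg (by omega), if_neg (by omega)]
    ring
  rw [Matrix.det_of_lowerTriangular _ h]
  have : ∀ i : Fin K, Pm K i i = 1 := by
    intro i; simp [Pm]
  simp [this]

lemma detCm (ht : ∀ k, k ≤ K → t k * t k = 1) :
    (Cm K t).det = (∏ i : Fin K, t ((i : ℕ) + 1)) * (1 + t 0 * ∑ i : Fin K, t ((i : ℕ) + 1)) := by
  have hC : Cm K t = Matrix.diagonal (fun i : Fin K => t ((i : ℕ) + 1))
      * (1 + Matrix.replicateCol Unit (fun i : Fin K => t 0 * t ((i : ℕ) + 1)) * Matrix.replicateRow Unit (fun _ => (1 : ℤ))) := by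
    ext i j
    rw [Matrix.diagonal_mul]
    have h1 := ht ((i : ℕ) + 1) (by omega)
    simp only [Cm, Matrix.of_apply, Matrix.add_apply, Matrix.one_apply,
      Matrix.mul_apply, Matrix.replicateCol_apply, Matrix.replicateRow_apply, Finset.univ_unique,
      Finset.sum_singleton, mul_one]
    by_cases hij : i = j
    · subst hij
      simp only [if_pos rfl, if_true]
      linear_combination (-(t 0)) * h1
    · rw [if_neg (fun h => hij (Fin.ext h)), if_neg hij]
      linear_combination (-(t 0)) * h1
  rw [hC, Matrix.det_mul, Matrix.det_diagonal, Matrix.det_one_add_replicateCol_mul_replicateRow]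
  congr 1
  simp [dotProduct, Finset.mul_sum]

lemma key (K : ℕ) (t : ℕ → ℤ) (ht : ∀ k, k ≤ K → t k * t k = 1) :
    (Matrix.of fun i j : Fin K =>
      (t i + t ((i : ℕ) + 1)) * (if i = j then (1 : ℤ) else 0)
        - t i * (if (i : ℕ) = (j : ℕ) + 1 then 1 else 0)
        - t j * (if (i : ℕ) + 1 = (j : ℕ) then 1 else 0)).det
    = (∏ i : Fin K, t ((i : ℕ) + 1)) * (1 + t 0 * ∑ i : Fin K, t ((i : ℕ) + 1)) := by
  rw [factor, Matrix.det_mul, Matrix.det_mul, Matrix.det_transpose, detPm, detCm ht]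
  ring

lemma sum_shift (N : ℕ) (hN : 1 ≤ N) (f : Fin N → ℤ) (u : ℕ → ℤ)
    (h : ∀ (k : ℕ) (hk : k < N), f ⟨k, hk⟩ = u k) :
    ∑ k, f k = u 0 + ∑ i : Fin (N - 1), u ((i : ℕ) + 1) := by
  obtain ⟨K, rfl⟩ : ∃ K, N = K + 1 := ⟨N - 1, by omega⟩
  rw [Fin.sum_univ_succ]
  congr 1
  · exact h 0 (by omega)
  · exact Finset.sum_congr rfl fun i _ => h ((i : ℕ) + 1) (by omega)


/-- For any parity sequence `s ∈ S_{m|n}` with `m ≠ n`, the finite Cartan matrix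
`A^s = (A^s_{i,j})_{i,j=1}^{N-1}` with
`A^s_{i,j} = (s_i + s_{i+1})δ_{i,j} - s_i δ_{i,j+1} - s_j δ_{i+1,j}` satisfies
`|det A^s| = |m - n|`.  Here `s : Fin (m+n) → ℤ` is 0-based: `s ⟨k⟩` is the paper's
`s_{k+1}`, and the matrix index `i : Fin (m+n-1)` corresponds to the paper's `i+1`. -/
theorem stmt2 (m n : ℕ) (hN : 3 ≤ m + n) (hmn : m ≠ n)
    (s : Fin (m + n) → ℤ) (hs : ∀ i, s i = 1 ∨ s i = -1)
    (hm : (Finset.univ.filter (fun i => s i = 1)).card = m) :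
    |Matrix.det (Matrix.of fun i j : Fin (m + n - 1) =>
      (s ⟨(i : ℕ), Nat.lt_of_lt_of_le i.isLt (Nat.sub_le _ _)⟩
          + s ⟨(i : ℕ) + 1, by have := i.isLt; omega⟩) * (if i = j then 1 else 0)
        - s ⟨(i : ℕ), Nat.lt_of_lt_of_le i.isLt (Nat.sub_le _ _)⟩
            * (if (i : ℕ) = (j : ℕ) + 1 then 1 else 0)
        - s ⟨(j : ℕ), Nat.lt_of_lt_of_le j.isLt (Nat.sub_le _ _)⟩
            * (if (i : ℕ) + 1 = (j : ℕ) then 1 else 0))|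
      = |(m : ℤ) - (n : ℤ)| := by
  set t : ℕ → ℤ := fun k => if h : k < m + n then s ⟨k, h⟩ else 1 with htdef
  have hts : ∀ (k : ℕ) (h : k < m + n), s ⟨k, h⟩ = t k := by
    intro k h
    simp [htdef, h]
  have htpm : ∀ k, k < m + n → t k = 1 ∨ t k = -1 := by
    intro k hk; rw [← hts k hk]; exact hs _
  have ht : ∀ k, k ≤ m + n - 1 → t k * t k = 1 := by
    intro k hk
    rcases htpm k (by omega) with h | h <;> rw [h] <;> ring
  have hMat : (Matrix.of fun i j : Fin (m + n - 1) =>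
      (s ⟨(i : ℕ), Nat.lt_of_lt_of_le i.isLt (Nat.sub_le _ _)⟩
          + s ⟨(i : ℕ) + 1, by have := i.isLt; omega⟩) * (if i = j then 1 else 0)
        - s ⟨(i : ℕ), Nat.lt_of_lt_of_le i.isLt (Nat.sub_le _ _)⟩
            * (if (i : ℕ) = (j : ℕ) + 1 then 1 else 0)
        - s ⟨(j : ℕ), Nat.lt_of_lt_of_le j.isLt (Nat.sub_le _ _)⟩
            * (if (i : ℕ) + 1 = (j : ℕ) then 1 else 0))
      = (Matrix.of fun i j : Fin (m + n - 1) =>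
      (t i + t ((i : ℕ) + 1)) * (if i = j then (1 : ℤ) else 0)
        - t i * (if (i : ℕ) = (j : ℕ) + 1 then 1 else 0)
        - t j * (if (i : ℕ) + 1 = (j : ℕ) then 1 else 0)) := by
    ext i j
    simp only [Matrix.of_apply, hts]
  rw [hMat, key (m + n - 1) t ht, abs_mul]
  have habs1 : |∏ i : Fin (m + n - 1), t ((i : ℕ) + 1)| = 1 := by
    rw [Finset.abs_prod]
    refine Finset.prod_eq_one fun i _ => ?_
    rcases htpm ((i : ℕ) + 1) (by have := i.isLt; omega) with h | h <;> simp [h]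
  rw [habs1, one_mul]
  have h0 : t 0 * t 0 = 1 := ht 0 (by omega)
  have hfac : 1 + t 0 * ∑ i : Fin (m + n - 1), t ((i : ℕ) + 1)
      = t 0 * (t 0 + ∑ i : Fin (m + n - 1), t ((i : ℕ) + 1)) := by
    rw [mul_add, h0]
  have habs0 : |t 0| = 1 := by
    rcases htpm 0 (by omega) with h | h <;> simp [h]
  rw [hfac, abs_mul, habs0, one_mul]
  have hsum : t 0 + ∑ i : Fin (m + n - 1), t ((i : ℕ) + 1) = ∑ k, s k :=
    (sum_shift (m + n) (by omega) s t hts).symm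
  rw [hsum]
  have hsum2 : ∑ k, s k = (m : ℤ) - (n : ℤ) := by
    rw [← Finset.sum_filter_add_sum_filter_not Finset.univ (fun i => s i = 1)]
    have h1 : ∑ i ∈ Finset.univ.filter (fun i => s i = 1), s i = (m : ℤ) := by
      rw [Finset.sum_congr rfl fun i hi => (Finset.mem_filter.mp hi).2, Finset.sum_const,
        hm, nsmul_eq_mul, mul_one]
    have hcard : (Finset.univ.filter (fun i => ¬s i = 1)).card = n := by
      have := Finset.card_filter_add_card_filter_not (s := (Finset.univ : Finset (Fin (m+n)))) (p := fun i => s i = 1)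
      simp only [Finset.card_univ, Fintype.card_fin, hm] at this
      omega
    have h2 : ∑ i ∈ Finset.univ.filter (fun i => ¬s i = 1), s i = -(n : ℤ) := by
      have hall : ∀ i ∈ Finset.univ.filter (fun i => ¬s i = 1), s i = -1 :=
        fun i hi => (hs i).resolve_left (Finset.mem_filter.mp hi).2
      rw [Finset.sum_congr rfl hall, Finset.sum_const, hcard, nsmul_eq_mul]
      ring
    rw [h1, h2]; ring
  rw [hsum2]
end

section
/- The bracket [X,Y]_a = XY - (-1)^{|X||Y|} a YX on a superalgebra satisfies the generalized Jacobi identity [[X,Y]_a, Z]_b = [X, [Y,Z]_c]_{abc^{-1}} + (-1)^{|Y||Z|} c [[X,Z]_{bc^{-1}}, Y]_{ac^{-1}} for homogeneous elements X, Y, Z and nonzero scalars a, b, c. -/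
/-- The super-bracket `[X,Y]_a = XY - (-1)^{|X||Y|} a YX` on an associative
superalgebra, for homogeneous elements of parities `pu, pv ∈ ℤ/2`. -/
noncomputable def sbr {K A : Type*} [Field K] [Ring A] [Algebra K A]
    (pu pv : ZMod 2) (a : K) (X Y : A) : A :=
  X * Y - ((-1 : K) ^ (pu.val * pv.val) * a) • (Y * X)

lemma negpow_congr {K : Type*} [Field K] {m n : ℕ} (h : m % 2 = n % 2) :
    ((-1 : K) ^ m = (-1) ^ n) := by
  rcases Nat.even_or_odd m with hm | hm
  · have hn : Even n := by rcases hm with ⟨k, hk⟩; exact (Nat.even_iff).2 (by omega)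
    rw [hm.neg_one_pow, hn.neg_one_pow]
  · have hn : Odd n := by rcases hm with ⟨k, hk⟩; exact (Nat.odd_iff).2 (by omega)
    rw [hm.neg_one_pow, hn.neg_one_pow]

lemma negpow_add_left {K : Type*} [Field K] (p q r : ZMod 2) :
    ((-1 : K) ^ ((p + q).val * r.val))
      = (-1) ^ (p.val * r.val) * (-1) ^ (q.val * r.val) := by
  rw [← pow_add]
  refine negpow_congr ?_
  have := ZMod.val_add p q
  have hp := ZMod.val_lt p
  have hq := ZMod.val_lt q
  have hr := ZMod.val_lt r
  interval_cases hpv : p.val <;> interval_cases hqv : q.val <;> interval_cases hrv : r.val <;> omega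

lemma negpow_sq {K : Type*} [Field K] (p q : ZMod 2) :
    ((-1 : K) ^ (p.val * q.val)) * ((-1) ^ (p.val * q.val)) = 1 := by
  rw [← pow_add]; exact Even.neg_one_pow ⟨p.val * q.val, rfl⟩

/-- The bracket `[X,Y]_a = XY - (-1)^{|X||Y|} a YX` satisfies the generalized Jacobi
identity
`[[X,Y]_a, Z]_b = [X,[Y,Z]_c]_{abc⁻¹} + (-1)^{|Y||Z|} c [[X,Z]_{bc⁻¹}, Y]_{ac⁻¹}`
for homogeneous `X, Y, Z` and nonzero scalars `a, b, c`. -/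
theorem stmt4 {K A : Type*} [Field K] [Ring A] [Algebra K A]
    (X Y Z : A) (px py pz : ZMod 2) (a b c : K)
    (ha : a ≠ 0) (hb : b ≠ 0) (hc : c ≠ 0) :
    sbr (px + py) pz b (sbr px py a X Y) Z
      = sbr px (py + pz) (a * b * c⁻¹) X (sbr py pz c Y Z)
        + ((-1 : K) ^ (py.val * pz.val) * c) •
            sbr (px + pz) py (a * c⁻¹) (sbr px pz (b * c⁻¹) X Z) Y := by
  unfold sbr
  have h1 := negpow_add_left px py pz (K := K)
  have h2 := negpow_add_left px pz py (K := K)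
  rw [Nat.mul_comm pz.val py.val] at h2
  have h3 : ((-1 : K) ^ (px.val * (py + pz).val))
      = (-1) ^ (px.val * py.val) * (-1) ^ (px.val * pz.val) := by
    rw [Nat.mul_comm px.val, negpow_add_left, Nat.mul_comm py.val, Nat.mul_comm pz.val]
  rw [h1, h2, h3]
  set u := ((-1 : K) ^ (px.val * py.val)) with hu
  set v := ((-1 : K) ^ (px.val * pz.val)) with hv
  set w := ((-1 : K) ^ (py.val * pz.val)) with hw
  have hu2 : u * u = 1 := negpow_sq px py
  have hv2 : v * v = 1 := negpow_sq px pz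
  have hw2 : w * w = 1 := negpow_sq py pz
  simp only [sub_mul, mul_sub, smul_mul_assoc, mul_smul_comm, smul_smul, smul_sub, mul_assoc]
  have hu' : u = 1 ∨ u = -1 := mul_self_eq_one_iff.1 hu2
  have hv' : v = 1 ∨ v = -1 := mul_self_eq_one_iff.1 hv2
  have hw' : w = 1 ∨ w = -1 := mul_self_eq_one_iff.1 hw2
  clear_value u v w
  match_scalars <;>
    rcases hu' with rfl | rfl <;> rcases hv' with rfl | rfl <;> rcases hw' with rfl | rfl <;>
    field_simp <;> ring
end

section
/- The toroidal braid group B̂_N admits an automorphism Φ (the Fourier transform) determined by Φ(T̂_i) = T̂_i for i = 1,...,N-1, Φ(Ŷ_j) = T̂_{j-1}^{-1}···T̂_1^{-1} τ̂ T̂_{N-1}···T̂_j, and Φ(τ̂) = Ŷ_1^{-1} T̂_1···T̂_{N-1}, i.e., these assignments preserve all defining relations of B̂_N and Φ is bijective. -/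
namespace Stmt8

/-- Generators of the toroidal braid group `B̂_N`: `inl none = τ̂`,
`inl (some i) = T̂_{i+1}` (0-based `i : Fin (N-1)`), `inr p = Ŷ_p` (`p ∈ ℤ/N`). -/
abbrev TGen (N : ℕ) := Option (Fin (N - 1)) ⊕ ZMod N

def Tf {N : ℕ} (i : Fin (N - 1)) : FreeGroup (TGen N) := FreeGroup.of (Sum.inl (some i))
def tauf {N : ℕ} : FreeGroup (TGen N) := FreeGroup.of (Sum.inl none)
def Yf {N : ℕ} (p : ZMod N) : FreeGroup (TGen N) := FreeGroup.of (Sum.inr p)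

/-- Defining relations of the toroidal braid group `B̂_N` (the 1-based index of
`Tf i` is `(i:ℕ)+1`). -/
def trels (N : ℕ) : Set (FreeGroup (TGen N)) :=
  {r | (∃ i j : Fin (N - 1), ((i : ℕ) + 1 < (j : ℕ) ∨ (j : ℕ) + 1 < (i : ℕ)) ∧
          r = Tf i * Tf j * (Tf i)⁻¹ * (Tf j)⁻¹) ∨
       (∃ i j : Fin (N - 1), ((j : ℕ) = (i : ℕ) + 1 ∨ (i : ℕ) = (j : ℕ) + 1) ∧
          r = Tf j * Tf i * Tf j * (Tf i * Tf j * Tf i)⁻¹) ∨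
       (∃ p q : ZMod N, r = Yf p * Yf q * (Yf p)⁻¹ * (Yf q)⁻¹) ∨
       (∃ (i : Fin (N - 1)) (p : ZMod N),
          p ≠ (((i : ℕ) + 1 : ℕ) : ZMod N) ∧ p ≠ (((i : ℕ) + 2 : ℕ) : ZMod N) ∧
          r = Tf i * Yf p * (Tf i)⁻¹ * (Yf p)⁻¹) ∨
       (∃ i : Fin (N - 1),
          r = (Tf i)⁻¹ * Yf (((i : ℕ) + 1 : ℕ) : ZMod N) * (Tf i)⁻¹ *
              (Yf (((i : ℕ) + 2 : ℕ) : ZMod N))⁻¹) ∨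
       (∃ i j : Fin (N - 1), (j : ℕ) = (i : ℕ) + 1 ∧
          r = tauf * Tf i * tauf⁻¹ * (Tf j)⁻¹) ∨
       (∃ i j : Fin (N - 1), (i : ℕ) = N - 2 ∧ (j : ℕ) = 0 ∧
          r = tauf * tauf * Tf i * tauf⁻¹ * tauf⁻¹ * (Tf j)⁻¹) ∨
       (∃ i : Fin (N - 1),
          r = tauf * Yf (((i : ℕ) + 1 : ℕ) : ZMod N) * tauf⁻¹ *
              (Yf (((i : ℕ) + 2 : ℕ) : ZMod N))⁻¹)}

/-- `T̂_{i+1}` in the toroidal braid group. -/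
def Tp {N : ℕ} (i : Fin (N - 1)) : PresentedGroup (trels N) :=
  PresentedGroup.of (Sum.inl (some i))

/-- `τ̂` in the toroidal braid group. -/
def taup {N : ℕ} : PresentedGroup (trels N) := PresentedGroup.of (Sum.inl none)

/-- `Ŷ_p` in the toroidal braid group. -/
def Yp {N : ℕ} (p : ZMod N) : PresentedGroup (trels N) := PresentedGroup.of (Sum.inr p)

/-- `Tg N a = T̂_{a+1}` for `a < N-1`, and `1` otherwise (a convenient total function
for writing products of the `T̂`'s). -/
def Tg (N : ℕ) (a : ℕ) : PresentedGroup (trels N) :=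
  if h : a < N - 1 then Tp ⟨a, h⟩ else 1

section Aux

variable {N : ℕ}

/-- total 1-based generator function: `t N k = T̂_k` for `1 ≤ k ≤ N-1`, else 1. -/
def t (N k : ℕ) : PresentedGroup (trels N) := if k = 0 then 1 else Tg N (k - 1)

lemma t_succ (m : ℕ) : t N (m + 1) = Tg N m := by simp [t]

lemma t_zero : t N 0 = 1 := rfl

lemma t_eq_one {k : ℕ} (h : k = 0 ∨ N ≤ k) : t N k = 1 := by
  rcases h with h | h
  · simp [h, t]
  · rcases Nat.eq_zero_or_pos k with h0 | h0
    · simp [h0, t]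
    · have : ¬ (k - 1 < N - 1) := by omega
      simp [t, Tg, this, Nat.pos_iff_ne_zero.mp h0]

lemma t_of_range {k : ℕ} (h1 : 1 ≤ k) (h2 : k ≤ N - 1) (hk : k - 1 < N - 1) :
    t N k = Tp ⟨k - 1, hk⟩ := by
  have : k ≠ 0 := by omega
  simp [t, Tg, hk, this]

/-- `y N j = Ŷ_{j mod N}`. -/
def y (N j : ℕ) : PresentedGroup (trels N) := Yp (j : ZMod N)

lemma rel_one {r : FreeGroup (TGen N)} (h : r ∈ trels N) :
    PresentedGroup.mk (trels N) r = 1 := by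
  have : r ∈ Subgroup.normalClosure (trels N) := Subgroup.subset_normalClosure h
  exact (QuotientGroup.eq_one_iff r).mpr this

lemma mk_Tf (i : Fin (N - 1)) : PresentedGroup.mk (trels N) (Tf i) = Tp i := rfl
lemma mk_tauf : PresentedGroup.mk (trels N) tauf = taup (N := N) := rfl
lemma mk_Yf (p : ZMod N) : PresentedGroup.mk (trels N) (Yf p) = Yp p := rfl

lemma Tp_eq_t (i : Fin (N - 1)) : Tp i = t N ((i : ℕ) + 1) := by
  rw [t_succ, Tg]
  simp [Fin.eta]

/-- R1 : far commutation -/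
lemma t_commute {i j : ℕ} (hij : i + 2 ≤ j ∨ j + 2 ≤ i) : t N i * t N j = t N j * t N i := by
  wlog h : i + 2 ≤ j generalizing i j
  · exact ((this (Or.inl (by omega)) (by omega))).symm
  by_cases hi : i = 0
  · simp [hi, t_zero]
  by_cases hj : j ≤ N - 1
  · have hi1 : i - 1 < N - 1 := by omega
    have hj1 : j - 1 < N - 1 := by omega
    have hr := rel_one (N := N) (Or.inl ⟨⟨i-1, hi1⟩, ⟨j-1, hj1⟩, Or.inl (by simp; omega), rfl⟩)
    simp only [map_mul, map_inv, mk_Tf] at hr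
    rw [mul_inv_eq_one, mul_inv_eq_iff_eq_mul] at hr
    rw [t_of_range (by omega) (by omega) hi1, t_of_range (by omega) (by omega) hj1]
    exact hr
  · rw [t_eq_one (k := j) (Or.inr (by omega))]
    simp

/-- R2 : braid relation -/
lemma t_braid {i : ℕ} (h1 : 1 ≤ i) (h2 : i + 1 ≤ N - 1) :
    t N (i+1) * t N i * t N (i+1) = t N i * t N (i+1) * t N i := by
  have hi1 : i - 1 < N - 1 := by omega
  have hj1 : i + 1 - 1 < N - 1 := by omega
  have hr := rel_one (N := N) (Or.inr (Or.inl ⟨⟨i-1, hi1⟩, ⟨i+1-1, hj1⟩, Or.inl (by simp; omega), rfl⟩))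
  simp only [map_mul, map_inv, mk_Tf] at hr
  rw [mul_inv_eq_one] at hr
  rw [t_of_range (by omega) (by omega) hi1, t_of_range (by omega) (by omega) hj1]
  exact hr

/-- R3 : Y's commute -/
lemma Yp_commute (p q : ZMod N) : Yp p * Yp q = Yp q * Yp p := by
  have hr := rel_one (N := N) (Or.inr (Or.inr (Or.inl ⟨p, q, rfl⟩)))
  simp only [map_mul, map_inv, mk_Yf] at hr
  rw [mul_inv_eq_one, mul_inv_eq_iff_eq_mul] at hr
  exact hr

/-- R4 : T-Y commutation -/
lemma tY_commute {i : ℕ} (h1 : 1 ≤ i) (h2 : i ≤ N - 1) {p : ZMod N}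
    (hp1 : p ≠ ((i : ℕ) : ZMod N)) (hp2 : p ≠ ((i + 1 : ℕ) : ZMod N)) :
    t N i * Yp p = Yp p * t N i := by
  have hi1 : i - 1 < N - 1 := by omega
  have e1 : i - 1 + 1 = i := by omega
  have e2 : i - 1 + 2 = i + 1 := by omega
  have hr := rel_one (N := N) (Or.inr (Or.inr (Or.inr (Or.inl
    ⟨⟨i-1, hi1⟩, p, by simpa [e1] using hp1, by simpa [e2] using hp2, rfl⟩))))
  simp only [map_mul, map_inv, mk_Tf, mk_Yf] at hr
  rw [mul_inv_eq_one, mul_inv_eq_iff_eq_mul] at hr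
  rw [t_of_range (by omega) (by omega) hi1]
  exact hr

/-- R5 : `T_i⁻¹ Y_i T_i⁻¹ = Y_{i+1}` -/
lemma tYt {i : ℕ} (h1 : 1 ≤ i) (h2 : i ≤ N - 1) :
    (t N i)⁻¹ * y N i * (t N i)⁻¹ = y N (i+1) := by
  have hi1 : i - 1 < N - 1 := by omega
  have e1 : i - 1 + 1 = i := by omega
  have e2 : i - 1 + 2 = i + 1 := by omega
  have hr := rel_one (N := N) (Or.inr (Or.inr (Or.inr (Or.inr (Or.inl ⟨⟨i-1, hi1⟩, rfl⟩)))))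
  simp only [map_mul, map_inv, mk_Tf, mk_Yf, e1, e2] at hr
  rw [mul_inv_eq_one] at hr
  rw [t_of_range (by omega) (by omega) hi1]
  exact hr

/-- R6 : `τ T_i τ⁻¹ = T_{i+1}` -/
lemma tau_t {i : ℕ} (h1 : 1 ≤ i) (h2 : i + 1 ≤ N - 1) :
    taup * t N i * taup⁻¹ = t N (i+1) := by
  have hi1 : i - 1 < N - 1 := by omega
  have hj1 : i + 1 - 1 < N - 1 := by omega
  have hr := rel_one (N := N) (Or.inr (Or.inr (Or.inr (Or.inr (Or.inr (Or.inl
    ⟨⟨i-1, hi1⟩, ⟨i+1-1, hj1⟩, by simp; omega, rfl⟩))))))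
  simp only [map_mul, map_inv, mk_Tf, mk_tauf] at hr
  rw [mul_inv_eq_one] at hr
  rw [t_of_range (by omega) (by omega) hi1, t_of_range (by omega) (by omega) hj1]
  exact hr

/-- R7 : `τ² T_{N-1} τ⁻² = T_1` -/
lemma tau_t_top (hN : 4 ≤ N) :
    taup * taup * t N (N-1) * taup⁻¹ * taup⁻¹ = t N 1 := by
  have hi1 : N - 1 - 1 < N - 1 := by omega
  have hj1 : 1 - 1 < N - 1 := by omega
  have hr := rel_one (N := N) (Or.inr (Or.inr (Or.inr (Or.inr (Or.inr (Or.inr (Or.inl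
    ⟨⟨N-1-1, hi1⟩, ⟨1-1, hj1⟩, by simp; omega, by simp, rfl⟩)))))))
  simp only [map_mul, map_inv, mk_Tf, mk_tauf] at hr
  rw [mul_inv_eq_one] at hr
  rw [t_of_range (by omega) (by omega) hi1, t_of_range (by omega) (by omega) hj1]
  exact hr

/-- R8 : `τ Y_j τ⁻¹ = Y_{j+1}` -/
lemma tau_y {j : ℕ} (h1 : 1 ≤ j) (h2 : j ≤ N - 1) :
    taup * y N j * taup⁻¹ = y N (j+1) := by
  have hi1 : j - 1 < N - 1 := by omega
  have e1 : j - 1 + 1 = j := by omega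
  have e2 : j - 1 + 2 = j + 1 := by omega
  have hr := rel_one (N := N) (Or.inr (Or.inr (Or.inr (Or.inr (Or.inr (Or.inr (Or.inr
    ⟨⟨j-1, hi1⟩, rfl⟩)))))))
  simp only [map_mul, map_inv, mk_Tf, mk_tauf, mk_Yf, e1, e2] at hr
  rw [mul_inv_eq_one] at hr
  exact hr

/-- ascending product `t a * t (a+1) * ⋯ * t (a+n-1)` -/
def up (N : ℕ) : ℕ → ℕ → PresentedGroup (trels N)
  | _, 0 => 1
  | a, n+1 => t N a * up N (a+1) n

@[simp] lemma up_zero (a : ℕ) : up N a 0 = 1 := rfl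
lemma up_succ (a n : ℕ) : up N a (n+1) = t N a * up N (a+1) n := rfl

lemma up_append (a n : ℕ) : up N a (n+1) = up N a n * t N (a+n) := by
  induction n generalizing a with
  | zero => simp [up_succ]
  | succ n ih =>
      rw [up_succ, ih (a+1), up_succ, mul_assoc]
      ring_nf

/-- descending product `t b * t (b-1) * ⋯ * t (b-n+1)` -/
def dn (N : ℕ) : ℕ → ℕ → PresentedGroup (trels N)
  | _, 0 => 1
  | b, n+1 => t N b * dn N (b-1) n

@[simp] lemma dn_zero (b : ℕ) : dn N b 0 = 1 := rfl
lemma dn_succ (b n : ℕ) : dn N b (n+1) = t N b * dn N (b-1) n := rfl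

lemma dn_append (b n : ℕ) (h : n ≤ b) : dn N b (n+1) = dn N b n * t N (b-n) := by
  induction n generalizing b with
  | zero => simp [dn_succ]
  | succ n ih =>
      rw [dn_succ, ih (b-1) (by omega), dn_succ, mul_assoc]
      have e : b - 1 - n = b - (n+1) := by omega
      rw [e]

lemma t_up_commute {i a n : ℕ} (h : ∀ k, 1 ≤ k → a ≤ k → k < a + n → i + 2 ≤ k ∨ k + 2 ≤ i) :
    t N i * up N a n = up N a n * t N i := by
  induction n generalizing a with
  | zero => simp
  | succ n ih =>
      rw [up_succ, ← mul_assoc]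
      have hc : t N i * t N a = t N a * t N i := by
        rcases Nat.eq_zero_or_pos a with rfl | ha
        · simp [t_zero]
        · exact t_commute (h a (by omega) le_rfl (by omega))
      rw [hc, mul_assoc, ih (fun k hk1 hk2 hk3 => h k hk1 (by omega) (by omega)), mul_assoc]

lemma t_dn_commute {i b n : ℕ} (h : ∀ k, 1 ≤ k → b + 1 ≤ k + n → k ≤ b → i + 2 ≤ k ∨ k + 2 ≤ i) :
    t N i * dn N b n = dn N b n * t N i := by
  induction n generalizing b with
  | zero => simp
  | succ n ih =>
      rw [dn_succ, ← mul_assoc]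
      have hc : t N i * t N b = t N b * t N i := by
        rcases Nat.eq_zero_or_pos b with rfl | hb
        · simp [t_zero]
        · exact t_commute (h b (by omega) (by omega) le_rfl)
      rw [hc, mul_assoc, ih (fun k hk1 hk2 hk3 => h k hk1 (by omega) (by omega)), mul_assoc]

/-- τ shifts an ascending block up -/
lemma tau_up_shift {a n : ℕ} (h1 : 1 ≤ a) (h2 : a + n + 1 ≤ N) :
    taup * up N a n = up N (a+1) n * taup := by
  induction n generalizing a with
  | zero => simp
  | succ n ih =>
      have ht : taup * t N a = t N (a+1) * taup := by
        have := tau_t (N := N) (i := a) h1 (by omega)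
        rw [← this]; group
      rw [up_succ, ← mul_assoc, ht, mul_assoc, ih (by omega) (by omega), up_succ, ← mul_assoc]

/-- an ascending block (indices ≥ 2) shifted down past τ -/
lemma up_tau_shift {a n : ℕ} (h1 : 2 ≤ a) (h2 : a + n ≤ N) :
    up N a n * taup = taup * up N (a-1) n := by
  induction n generalizing a with
  | zero => simp
  | succ n ih =>
      have ht : t N a * taup = taup * t N (a-1) := by
        have := tau_t (N := N) (i := a-1) (by omega) (by omega)
        have e : a - 1 + 1 = a := by omega
        rw [e] at this
        rw [← this]; group
      have e1 : a + 1 - 1 = a := by omega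
      have e2 : a - 1 + 1 = a := by omega
      rw [up_succ, mul_assoc, ih (by omega) (by omega), e1, ← mul_assoc, ht, mul_assoc,
        up_succ, e2]

/-- τ shifts a descending block up -/
lemma tau_dn_shift {b n : ℕ} (h1 : n ≤ b) (h2 : b + 2 ≤ N) :
    taup * dn N b n = dn N (b+1) n * taup := by
  induction n generalizing b with
  | zero => simp
  | succ n ih =>
      have ht : taup * t N b = t N (b+1) * taup := by
        have := tau_t (N := N) (i := b) (by omega) (by omega)
        rw [← this]; group
      have e : b + 1 - 1 = b := by omega
      have e2 : b - 1 + 1 = b := by omega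
      rw [dn_succ, ← mul_assoc, ht, mul_assoc, ih (by omega) (by omega), dn_succ, e, e2,
        ← mul_assoc]

/-- a descending block (indices ≥ 2) shifted down past τ -/
lemma dn_tau_shift {b n : ℕ} (h1 : n + 1 ≤ b) (h2 : b + 1 ≤ N) :
    dn N b n * taup = taup * dn N (b-1) n := by
  induction n generalizing b with
  | zero => simp
  | succ n ih =>
      have ht : t N b * taup = taup * t N (b-1) := by
        have := tau_t (N := N) (i := b-1) (by omega) (by omega)
        have e : b - 1 + 1 = b := by omega
        rw [e] at this
        rw [← this]; group
      rw [dn_succ, mul_assoc, ih (by omega) (by omega), ← mul_assoc, ht, mul_assoc, ← dn_succ]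

/-- F1 : conjugation by an ascending block shifts an interior generator up -/
lemma up_t_shift {a n i : ℕ} (h1 : 1 ≤ a) (ha : a ≤ i) (hi : i + 2 ≤ a + n)
    (hb : a + n ≤ N) : up N a n * t N i = t N (i+1) * up N a n := by
  induction n generalizing a with
  | zero => omega
  | succ n ih =>
      rcases Nat.lt_or_ge a i with hlt | hge
      · rw [up_succ, mul_assoc, ih (a := a+1) (by omega) (by omega) (by omega) (by omega),
          ← mul_assoc, t_commute (i := a) (j := i+1) (Or.inl (by omega)), mul_assoc]
      · have haa : a = i := by omega
        subst haa
        obtain ⟨m, rfl⟩ : ∃ m, n = m + 1 := ⟨n - 1, by omega⟩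
        have hcomm : up N (a+1+1) m * t N a = t N a * up N (a+1+1) m :=
          (t_up_commute (i := a) (fun k hk1 hk2 hk3 => Or.inl (by omega))).symm
        rw [up_succ, up_succ]
        simp only [mul_assoc]
        rw [hcomm]
        simp only [← mul_assoc]
        rw [← t_braid (by omega : 1 ≤ a) (by omega : a + 1 ≤ N - 1)]

/-- F2 : conjugation by a descending block shifts an interior generator down -/
lemma dn_t_shift {b n i : ℕ} (h2 : 2 ≤ i) (hlow : b + 2 ≤ i + n) (hup : i ≤ b)
    (hb : b + 1 ≤ N) : dn N b n * t N i = t N (i-1) * dn N b n := by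
  induction n generalizing b with
  | zero => omega
  | succ n ih =>
      rcases Nat.lt_or_ge i b with hlt | hge
      · rw [dn_succ, mul_assoc, ih (b := b-1) (by omega) (by omega) (by omega),
          ← mul_assoc, t_commute (i := b) (j := i-1) (Or.inr (by omega)), mul_assoc]
      · have hbb : b = i := by omega
        subst hbb
        obtain ⟨m, rfl⟩ : ∃ m, n = m + 1 := ⟨n - 1, by omega⟩
        have hcomm : dn N (b-1-1) m * t N b = t N b * dn N (b-1-1) m :=
          (t_dn_commute (i := b) (fun k hk1 hk2 hk3 => Or.inr (by omega))).symm
        have e : b - 1 + 1 = b := by omega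
        have hbr := t_braid (N := N) (i := b-1) (by omega) (by omega : b - 1 + 1 ≤ N - 1)
        rw [e] at hbr
        rw [dn_succ, dn_succ]
        simp only [mul_assoc]
        rw [hcomm]
        simp only [← mul_assoc]
        rw [hbr]

lemma inv_swap {G : Type*} [Group G] {a b c d : G} (h : a * b = c * d) :
    c⁻¹ * a = d * b⁻¹ := by
  rw [inv_mul_eq_iff_eq_mul, ← mul_assoc, ← h, mul_assoc]
  simp

lemma x_up_commute {x : PresentedGroup (trels N)} {a n : ℕ}
    (h : ∀ k, 1 ≤ k → a ≤ k → k < a + n → x * t N k = t N k * x) :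
    x * up N a n = up N a n * x := by
  induction n generalizing a with
  | zero => simp
  | succ n ih =>
      have hc : x * t N a = t N a * x := by
        rcases Nat.eq_zero_or_pos a with rfl | ha
        · simp [t_zero]
        · exact h a (by omega) le_rfl (by omega)
      rw [up_succ, ← mul_assoc, hc, mul_assoc,
        ih (fun k hk1 hk2 hk3 => h k hk1 (by omega) (by omega)), mul_assoc]

lemma x_dn_commute {x : PresentedGroup (trels N)} {b n : ℕ}
    (h : ∀ k, 1 ≤ k → b + 1 ≤ k + n → k ≤ b → x * t N k = t N k * x) :
    x * dn N b n = dn N b n * x := by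
  induction n generalizing b with
  | zero => simp
  | succ n ih =>
      have hc : x * t N b = t N b * x := by
        rcases Nat.eq_zero_or_pos b with rfl | hb
        · simp [t_zero]
        · exact h b (by omega) (by omega) le_rfl
      rw [dn_succ, ← mul_assoc, hc, mul_assoc,
        ih (fun k hk1 hk2 hk3 => h k hk1 (by omega) (by omega)), mul_assoc]

/-- G1 -/
lemma G1 {a d : ℕ} (h1 : 1 ≤ a) (h2 : a + d ≤ N - 1) :
    up N (a+1) d * up N a d * t N (a+d) = t N a * (up N (a+1) d * up N a d) := by
  induction d with
  | zero => simp
  | succ d ih =>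
      have ihd := ih (by omega)
      have e1 : up N (a+1) (d+1) = up N (a+1) d * t N (a+d+1) := by
        rw [up_append, Nat.add_right_comm]
      have e2 : up N a (d+1) = up N a d * t N (a+d) := up_append a d
      have hc : t N (a+d+1) * up N a d = up N a d * t N (a+d+1) :=
        x_up_commute (fun k hk1 hk2 hk3 => t_commute (Or.inr (by omega)))
      have hbr : t N (a+d+1) * t N (a+d) * t N (a+d+1)
          = t N (a+d) * t N (a+d+1) * t N (a+d) := t_braid (by omega) (by omega)
      calc up N (a+1) (d+1) * up N a (d+1) * t N (a+d+1)
          = up N (a+1) d * t N (a+d+1) * (up N a d * t N (a+d)) * t N (a+d+1) := by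
            rw [e1, e2]
        _ = up N (a+1) d * (t N (a+d+1) * up N a d) * (t N (a+d) * t N (a+d+1)) := by
            simp only [mul_assoc]
        _ = up N (a+1) d * (up N a d * t N (a+d+1)) * (t N (a+d) * t N (a+d+1)) := by
            rw [hc]
        _ = up N (a+1) d * up N a d * (t N (a+d+1) * t N (a+d) * t N (a+d+1)) := by
            simp only [mul_assoc]
        _ = up N (a+1) d * up N a d * (t N (a+d) * t N (a+d+1) * t N (a+d)) := by rw [hbr]
        _ = (up N (a+1) d * up N a d * t N (a+d)) * (t N (a+d+1) * t N (a+d)) := by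
            simp only [mul_assoc]
        _ = (t N a * (up N (a+1) d * up N a d)) * (t N (a+d+1) * t N (a+d)) := by rw [ihd]
        _ = t N a * (up N (a+1) d * (up N a d * t N (a+d+1) * t N (a+d))) := by
            simp only [mul_assoc]
        _ = t N a * (up N (a+1) d * (t N (a+d+1) * up N a d * t N (a+d))) := by rw [← hc]
        _ = t N a * (up N (a+1) (d+1) * up N a (d+1)) := by
            rw [e1, e2]; simp only [mul_assoc]

/-- G2 -/
lemma G2 {a d : ℕ} (h1 : 1 ≤ a) (h2 : a + d ≤ N - 1) :
    t N (a+d) * (dn N (a+d-1) d * dn N (a+d) (d+1))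
      = dn N (a+d-1) d * dn N (a+d) (d+1) * t N a := by
  induction d with
  | zero => simp [dn_succ]
  | succ d ih =>
      have ihd := ih (by omega)
      have e0 : a + (d+1) - 1 = a + d := by omega
      have e1 : a + d - 1 = a + d - 1 := rfl
      have q0 : dn N (a+d) (d+1) = t N (a+d) * dn N (a+d-1) d := dn_succ _ _
      have q1 : dn N (a+d+1) (d+2) = t N (a+d+1) * dn N (a+d) (d+1) := by
        rw [dn_succ, Nat.add_sub_cancel]
      have hc : t N (a+d+1) * dn N (a+d-1) d = dn N (a+d-1) d * t N (a+d+1) :=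
        x_dn_commute (fun k hk1 hk2 hk3 => t_commute (Or.inr (by omega)))
      have hbr : t N (a+d+1) * t N (a+d) * t N (a+d+1)
          = t N (a+d) * t N (a+d+1) * t N (a+d) := t_braid (by omega) (by omega)
      show t N (a+d+1) * (dn N (a+d) (d+1) * dn N (a+d+1) (d+2))
          = dn N (a+d) (d+1) * dn N (a+d+1) (d+2) * t N a
      calc t N (a+d+1) * (dn N (a+d) (d+1) * dn N (a+d+1) (d+2))
          = t N (a+d+1) * (t N (a+d) * dn N (a+d-1) d
              * (t N (a+d+1) * (t N (a+d) * dn N (a+d-1) d))) := by rw [q1, q0]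
        _ = t N (a+d+1) * t N (a+d) * (dn N (a+d-1) d * t N (a+d+1))
              * (t N (a+d) * dn N (a+d-1) d) := by simp only [mul_assoc]
        _ = t N (a+d+1) * t N (a+d) * (t N (a+d+1) * dn N (a+d-1) d)
              * (t N (a+d) * dn N (a+d-1) d) := by rw [← hc]
        _ = (t N (a+d+1) * t N (a+d) * t N (a+d+1))
              * (dn N (a+d-1) d * (t N (a+d) * dn N (a+d-1) d)) := by
            simp only [mul_assoc]
        _ = (t N (a+d) * t N (a+d+1) * t N (a+d))
              * (dn N (a+d-1) d * (t N (a+d) * dn N (a+d-1) d)) := by rw [hbr]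
        _ = t N (a+d) * t N (a+d+1)
              * (t N (a+d) * (dn N (a+d-1) d * (t N (a+d) * dn N (a+d-1) d))) := by
            simp only [mul_assoc]
        _ = t N (a+d) * t N (a+d+1)
              * (t N (a+d) * (dn N (a+d-1) d * dn N (a+d) (d+1))) := by rw [← q0]
        _ = t N (a+d) * t N (a+d+1)
              * (dn N (a+d-1) d * dn N (a+d) (d+1) * t N a) := by rw [ihd]
        _ = t N (a+d) * (t N (a+d+1) * dn N (a+d-1) d) * (dn N (a+d) (d+1) * t N a) := by
            simp only [mul_assoc]
        _ = t N (a+d) * (dn N (a+d-1) d * t N (a+d+1)) * (dn N (a+d) (d+1) * t N a) := by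
            rw [hc]
        _ = (t N (a+d) * dn N (a+d-1) d) * (t N (a+d+1) * dn N (a+d) (d+1)) * t N a := by
            simp only [mul_assoc]
        _ = dn N (a+d) (d+1) * dn N (a+d+1) (d+2) * t N a := by rw [← q0, ← q1]

/-- G3 -/
lemma G3 {a d : ℕ} (h1 : 1 ≤ a) (h2 : a + d ≤ N - 1) :
    up N a d * dn N (a+d) (d+1) = dn N (a+d) d * up N a (d+1) := by
  induction d generalizing a with
  | zero => simp [dn_succ, up_succ]
  | succ d ih =>
      have ih' : up N (a+1) d * dn N (a+d+1) (d+1) = dn N (a+d+1) d * up N (a+1) (d+1) := by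
        have := ih (a := a+1) (by omega) (by omega)
        rwa [show a + 1 + d = a + d + 1 from by omega] at this
      have u1 : up N a (d+1) = t N a * up N (a+1) d := up_succ a d
      have q1 : dn N (a+d+1) (d+2) = dn N (a+d+1) (d+1) * t N a := by
        rw [dn_append _ _ (by omega), show a+d+1-(d+1) = a from by omega]
      have hc : t N a * dn N (a+d+1) d = dn N (a+d+1) d * t N a :=
        x_dn_commute (fun k hk1 hk2 hk3 => t_commute (Or.inl (by omega)))
      have hshift : up N a (d+2) * t N a = t N (a+1) * up N a (d+2) :=
        up_t_shift (by omega) le_rfl (by omega) (by omega)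
      have q2 : dn N (a+d+1) (d+1) = dn N (a+d+1) d * t N (a+1) := by
        rw [dn_append _ _ (by omega), show a+d+1-d = a+1 from by omega]
      have u2 : up N a (d+2) = t N a * up N (a+1) (d+1) := up_succ a (d+1)
      show up N a (d+1) * dn N (a+d+1) (d+2) = dn N (a+d+1) (d+1) * up N a (d+2)
      calc up N a (d+1) * dn N (a+d+1) (d+2)
          = t N a * (up N (a+1) d * dn N (a+d+1) (d+1)) * t N a := by
            rw [u1, q1]; simp only [mul_assoc]
        _ = t N a * (dn N (a+d+1) d * up N (a+1) (d+1)) * t N a := by rw [ih']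
        _ = (t N a * dn N (a+d+1) d) * (up N (a+1) (d+1) * t N a) := by
            simp only [mul_assoc]
        _ = (dn N (a+d+1) d * t N a) * (up N (a+1) (d+1) * t N a) := by rw [hc]
        _ = dn N (a+d+1) d * (t N a * up N (a+1) (d+1) * t N a) := by
            simp only [mul_assoc]
        _ = dn N (a+d+1) d * (up N a (d+2) * t N a) := by rw [← u2]
        _ = dn N (a+d+1) d * (t N (a+1) * up N a (d+2)) := by rw [hshift]
        _ = (dn N (a+d+1) d * t N (a+1)) * up N a (d+2) := by simp only [mul_assoc]
        _ = dn N (a+d+1) (d+1) * up N a (d+2) := by rw [← q2]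

lemma comm_inv_left {G : Type*} [Group G] {x u : G} (h : x * u = u * x) :
    x⁻¹ * u = u * x⁻¹ := by
  calc x⁻¹ * u = x⁻¹ * (u * x) * x⁻¹ := by group
    _ = x⁻¹ * (x * u) * x⁻¹ := by rw [h]
    _ = u * x⁻¹ := by group

lemma comm_inv_right {G : Type*} [Group G] {x u : G} (h : x * u = u * x) :
    x * u⁻¹ = u⁻¹ * x := (comm_inv_left h.symm).symm

lemma castNe [NeZero N] {j k : ℕ} (hj1 : 1 ≤ j) (hj2 : j ≤ N) (hk1 : 1 ≤ k) (hk2 : k ≤ N)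
    (hjk : j ≠ k) : (j : ZMod N) ≠ (k : ZMod N) := by
  intro h
  have h2 : (j : ZMod N).val = (k : ZMod N).val := by rw [h]
  rw [ZMod.val_natCast, ZMod.val_natCast] at h2
  rcases Nat.lt_or_ge j N with hj | hj <;> rcases Nat.lt_or_ge k N with hk | hk
  · rw [Nat.mod_eq_of_lt hj, Nat.mod_eq_of_lt hk] at h2; exact hjk h2
  · have hkN : k = N := by omega
    subst hkN
    rw [Nat.mod_eq_of_lt hj, Nat.mod_self] at h2; omega
  · have hjN : j = N := by omega
    subst hjN
    rw [Nat.mod_self, Nat.mod_eq_of_lt hk] at h2; omega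
  · omega

lemma y_t_comm [NeZero N] {i j : ℕ} (hi1 : 1 ≤ i) (hj1 : 1 ≤ j) (hj2 : j ≤ N)
    (hne1 : j ≠ i) (hne2 : j ≠ i + 1) : t N i * y N j = y N j * t N i := by
  by_cases hi2 : i ≤ N - 1 ∧ i + 1 ≤ N
  · exact tY_commute hi1 hi2.1 (castNe hj1 hj2 hi1 (by omega) hne1)
      (castNe hj1 hj2 (by omega) (by omega) hne2)
  · rw [t_eq_one (Or.inr (by omega))]
    simp

lemma y1_t_comm [NeZero N] {k : ℕ} (hN : 4 ≤ N) (hk : 2 ≤ k) :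
    y N 1 * t N k = t N k * y N 1 :=
  (y_t_comm (by omega) (by omega) (by omega) (by omega) (by omega)).symm

/-- The image of `τ̂` under the Fourier transform. -/
def SS (N : ℕ) : PresentedGroup (trels N) := (y N 1)⁻¹ * up N 1 (N-1)

/-- The image of `Ŷ_j` (`1 ≤ j ≤ N`) under the Fourier transform. -/
def XX (N j : ℕ) : PresentedGroup (trels N) := (up N 1 (j-1))⁻¹ * taup * dn N (N-1) (N-j)

lemma XX_one : XX N 1 = taup * dn N (N-1) (N-1) := by simp [XX]

lemma up_one : up N 1 1 = t N 1 := by simp [up_succ]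

lemma dn_break {j : ℕ} (h1 : 1 ≤ j) (h2 : j ≤ N - 1) :
    dn N (N-1) (N-j) = dn N (N-1) (N-j-1) * t N j := by
  have hd := dn_append (N := N) (N-1) (N-j-1) (by omega)
  rw [show N-j-1+1 = N-j from by omega, show N-1-(N-j-1) = j from by omega] at hd
  exact hd

lemma up_break {j : ℕ} (h1 : 1 ≤ j) :
    up N 1 j = up N 1 (j-1) * t N j := by
  have hu := up_append (N := N) 1 (j-1)
  rw [show j-1+1 = j from by omega, show 1+(j-1) = j from by omega] at hu
  exact hu

/-- relation R5 holds for the `XX` family by pure cancellation -/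
lemma L_XCon {j : ℕ} (h1 : 1 ≤ j) (h2 : j ≤ N - 1) :
    (t N j)⁻¹ * XX N j * (t N j)⁻¹ = XX N (j+1) := by
  show (t N j)⁻¹ * ((up N 1 (j-1))⁻¹ * taup * dn N (N-1) (N-j)) * (t N j)⁻¹
      = XX N (j+1)
  calc (t N j)⁻¹ * ((up N 1 (j-1))⁻¹ * taup * dn N (N-1) (N-j)) * (t N j)⁻¹
      = (t N j)⁻¹ * (up N 1 (j-1))⁻¹ * taup * dn N (N-1) (N-j-1) * (t N j * (t N j)⁻¹) := by
        rw [dn_break h1 h2]; simp only [mul_assoc]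
    _ = (up N 1 (j-1) * t N j)⁻¹ * taup * dn N (N-1) (N-j-1) := by
        simp [mul_inv_rev, mul_assoc]
    _ = (up N 1 j)⁻¹ * taup * dn N (N-1) (N-j-1) := by rw [← up_break h1]
    _ = XX N (j+1) := by
        rw [XX, show j+1-1 = j from rfl, show N-(j+1) = N-j-1 from by omega]

/-- relation R4 holds for the `XX` family -/
lemma L_B {i j : ℕ} (hi1 : 1 ≤ i) (hi2 : i ≤ N-1) (hj1 : 1 ≤ j) (hj2 : j ≤ N)
    (hne1 : j ≠ i) (hne2 : j ≠ i+1) : t N i * XX N j = XX N j * t N i := by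
  rcases Nat.lt_or_ge j i with hlt | hge
  · -- j < i, so i ≥ 2 and everything below the block shifts down through τ
    have hP : t N i * (up N 1 (j-1))⁻¹ = (up N 1 (j-1))⁻¹ * t N i :=
      comm_inv_right (t_up_commute (i := i) (a := 1) (n := j-1)
        (fun k hk1 hk2 hk3 => Or.inr (by omega)))
    have htau : t N i * taup = taup * t N (i-1) := by
      have h := tau_t (N := N) (i := i-1) (by omega) (by omega)
      rw [show i-1+1 = i from by omega] at h
      rw [← h]; group
    have hQ : t N (i-1) * dn N (N-1) (N-j) = dn N (N-1) (N-j) * t N i :=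
      (dn_t_shift (by omega) (by omega) (by omega) (by omega)).symm
    calc t N i * ((up N 1 (j-1))⁻¹ * taup * dn N (N-1) (N-j))
        = (t N i * (up N 1 (j-1))⁻¹) * taup * dn N (N-1) (N-j) := by
          simp only [mul_assoc]
      _ = ((up N 1 (j-1))⁻¹ * t N i) * taup * dn N (N-1) (N-j) := by rw [hP]
      _ = (up N 1 (j-1))⁻¹ * (t N i * taup) * dn N (N-1) (N-j) := by
          simp only [mul_assoc]
      _ = (up N 1 (j-1))⁻¹ * (taup * t N (i-1)) * dn N (N-1) (N-j) := by rw [htau]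
      _ = (up N 1 (j-1))⁻¹ * taup * (t N (i-1) * dn N (N-1) (N-j)) := by
          simp only [mul_assoc]
      _ = (up N 1 (j-1))⁻¹ * taup * (dn N (N-1) (N-j) * t N i) := by rw [hQ]
      _ = ((up N 1 (j-1))⁻¹ * taup * dn N (N-1) (N-j)) * t N i := by
          simp only [mul_assoc]
  · -- j ≥ i + 2
    have hge2 : i + 2 ≤ j := by omega
    have hP : t N i * (up N 1 (j-1))⁻¹ = (up N 1 (j-1))⁻¹ * t N (i+1) := by
      have h := up_t_shift (N := N) (a := 1) (n := j-1) (i := i)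
        (by omega) (by omega) (by omega) (by omega)
      exact (inv_swap h.symm).symm
    have htau : t N (i+1) * taup = taup * t N i := by
      have h := tau_t (N := N) (i := i) (by omega) (by omega)
      rw [← h]; group
    have hQ : t N i * dn N (N-1) (N-j) = dn N (N-1) (N-j) * t N i :=
      t_dn_commute (i := i) (b := N-1) (n := N-j)
        (fun k hk1 hk2 hk3 => Or.inl (by omega))
    calc t N i * ((up N 1 (j-1))⁻¹ * taup * dn N (N-1) (N-j))
        = (t N i * (up N 1 (j-1))⁻¹) * taup * dn N (N-1) (N-j) := by
          simp only [mul_assoc]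
      _ = ((up N 1 (j-1))⁻¹ * t N (i+1)) * taup * dn N (N-1) (N-j) := by rw [hP]
      _ = (up N 1 (j-1))⁻¹ * (t N (i+1) * taup) * dn N (N-1) (N-j) := by
          simp only [mul_assoc]
      _ = (up N 1 (j-1))⁻¹ * (taup * t N i) * dn N (N-1) (N-j) := by rw [htau]
      _ = (up N 1 (j-1))⁻¹ * taup * (t N i * dn N (N-1) (N-j)) := by
          simp only [mul_assoc]
      _ = (up N 1 (j-1))⁻¹ * taup * (dn N (N-1) (N-j) * t N i) := by rw [hQ]
      _ = ((up N 1 (j-1))⁻¹ * taup * dn N (N-1) (N-j)) * t N i := by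
          simp only [mul_assoc]

section Main
variable [NeZero N] (hN : 4 ≤ N)
include hN

lemma h_tyt : (t N 1)⁻¹ * y N 1 * (t N 1)⁻¹ = y N 2 := by
  have h := tYt (N := N) (i := 1) (by omega) (by omega)
  simpa using h

lemma y1t1 : (y N 1)⁻¹ * t N 1 = (t N 1)⁻¹ * (y N 2)⁻¹ := by
  rw [← h_tyt hN]; group

lemma t1y1 : t N 1 * (y N 1)⁻¹ = (y N 2)⁻¹ * (t N 1)⁻¹ := by
  rw [← h_tyt hN]; group

lemma t1invy2 : (t N 1)⁻¹ * (y N 2)⁻¹ * (t N 1)⁻¹ = (y N 1)⁻¹ := by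
  rw [← h_tyt hN]; group

lemma tau_y1inv : taup * (y N 1)⁻¹ = (y N 2)⁻¹ * taup := by
  have h := tau_y (N := N) (j := 1) (by omega) (by omega)
  have h' : taup * y N 1 * taup⁻¹ = y N 2 := by simpa using h
  rw [← h']; group

/-- consecutive members of the `XX` family commute -/
lemma L_A1 {m : ℕ} (h1 : 1 ≤ m) (h2 : m ≤ N - 1) :
    XX N m * XX N (m+1) = XX N (m+1) * XX N m := by
  have s1 : dn N (N-1) (N-m) * (t N m)⁻¹ = dn N (N-1) (N-m-1) := by
    rw [dn_break h1 h2]; simp [mul_assoc]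
  have s2 : dn N (N-1) (N-m-1) * (up N 1 (m-1))⁻¹
      = (up N 1 (m-1))⁻¹ * dn N (N-1) (N-m-1) := by
    exact comm_inv_right (x_up_commute (x := dn N (N-1) (N-m-1)) (a := 1) (n := m-1)
      (fun k hk1 hk2 hk3 =>
        (t_dn_commute (i := k) (b := N-1) (n := N-m-1)
          (fun l hl1 hl2 hl3 => Or.inl (by omega))).symm))
  have s3 : taup * (up N 1 (m-1))⁻¹ = (up N 2 (m-1))⁻¹ * taup := by
    have h := tau_up_shift (N := N) (a := 1) (n := m-1) (by omega) (by omega)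
    have h2' : taup * up N 1 (m-1) = up N 2 (m-1) * taup := by simpa using h
    exact (inv_swap h2').symm
  have s4 : dn N (N-1) (N-m-1) * taup = taup * dn N (N-2) (N-m-1) := by
    have h := dn_tau_shift (N := N) (b := N-1) (n := N-m-1) (by omega) (by omega)
    rwa [show N-1-1 = N-2 from by omega] at h
  have hEform : XX N m * (t N m)⁻¹ * XX N m
      = (up N 2 (m-1) * up N 1 (m-1))⁻¹ * (taup * taup)
        * (dn N (N-2) (N-m-1) * dn N (N-1) (N-m)) := by
    show (up N 1 (m-1))⁻¹ * taup * dn N (N-1) (N-m) * (t N m)⁻¹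
        * ((up N 1 (m-1))⁻¹ * taup * dn N (N-1) (N-m)) = _
    calc (up N 1 (m-1))⁻¹ * taup * dn N (N-1) (N-m) * (t N m)⁻¹
          * ((up N 1 (m-1))⁻¹ * taup * dn N (N-1) (N-m))
        = (up N 1 (m-1))⁻¹ * taup * (dn N (N-1) (N-m) * (t N m)⁻¹)
          * ((up N 1 (m-1))⁻¹ * taup * dn N (N-1) (N-m)) := by simp only [mul_assoc]
      _ = (up N 1 (m-1))⁻¹ * taup * dn N (N-1) (N-m-1)
          * ((up N 1 (m-1))⁻¹ * taup * dn N (N-1) (N-m)) := by rw [s1]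
      _ = (up N 1 (m-1))⁻¹ * taup
          * (dn N (N-1) (N-m-1) * (up N 1 (m-1))⁻¹)
          * (taup * dn N (N-1) (N-m)) := by simp only [mul_assoc]
      _ = (up N 1 (m-1))⁻¹ * taup
          * ((up N 1 (m-1))⁻¹ * dn N (N-1) (N-m-1))
          * (taup * dn N (N-1) (N-m)) := by rw [s2]
      _ = (up N 1 (m-1))⁻¹ * (taup * (up N 1 (m-1))⁻¹)
          * (dn N (N-1) (N-m-1) * taup) * dn N (N-1) (N-m) := by simp only [mul_assoc]
      _ = (up N 1 (m-1))⁻¹ * ((up N 2 (m-1))⁻¹ * taup)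
          * (taup * dn N (N-2) (N-m-1)) * dn N (N-1) (N-m) := by rw [s3, s4]
      _ = ((up N 1 (m-1))⁻¹ * (up N 2 (m-1))⁻¹) * (taup * taup)
          * (dn N (N-2) (N-m-1) * dn N (N-1) (N-m)) := by simp only [mul_assoc]
      _ = (up N 2 (m-1) * up N 1 (m-1))⁻¹ * (taup * taup)
          * (dn N (N-2) (N-m-1) * dn N (N-1) (N-m)) := by rw [mul_inv_rev]
  have e1 : t N m * (up N 2 (m-1) * up N 1 (m-1))⁻¹
      = (up N 2 (m-1) * up N 1 (m-1))⁻¹ * t N 1 := by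
    have h := G1 (N := N) (a := 1) (d := m-1) (by omega) (by omega)
    rw [show (1:ℕ)+1 = 2 from rfl, show 1+(m-1) = m from by omega] at h
    exact (inv_swap h.symm).symm
  have e2 : t N 1 * (taup * taup) = (taup * taup) * t N (N-1) := by
    have h := tau_t_top hN
    rw [← h]; group
  have e3 : t N (N-1) * (dn N (N-2) (N-m-1) * dn N (N-1) (N-m))
      = (dn N (N-2) (N-m-1) * dn N (N-1) (N-m)) * t N m := by
    have h := G2 (N := N) (a := m) (d := N-m-1) (by omega) (by omega)
    rw [show m+(N-m-1) = N-1 from by omega, show N-1-1 = N-2 from by omega,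
      show N-m-1+1 = N-m from by omega] at h
    exact h
  have hE : t N m * (XX N m * (t N m)⁻¹ * XX N m)
      = (XX N m * (t N m)⁻¹ * XX N m) * t N m := by
    rw [hEform]
    calc t N m * ((up N 2 (m-1) * up N 1 (m-1))⁻¹ * (taup * taup)
          * (dn N (N-2) (N-m-1) * dn N (N-1) (N-m)))
        = (t N m * (up N 2 (m-1) * up N 1 (m-1))⁻¹) * (taup * taup)
          * (dn N (N-2) (N-m-1) * dn N (N-1) (N-m)) := by simp only [mul_assoc]
      _ = ((up N 2 (m-1) * up N 1 (m-1))⁻¹ * t N 1) * (taup * taup)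
          * (dn N (N-2) (N-m-1) * dn N (N-1) (N-m)) := by rw [e1]
      _ = (up N 2 (m-1) * up N 1 (m-1))⁻¹ * (t N 1 * (taup * taup))
          * (dn N (N-2) (N-m-1) * dn N (N-1) (N-m)) := by simp only [mul_assoc]
      _ = (up N 2 (m-1) * up N 1 (m-1))⁻¹ * ((taup * taup) * t N (N-1))
          * (dn N (N-2) (N-m-1) * dn N (N-1) (N-m)) := by rw [e2]
      _ = (up N 2 (m-1) * up N 1 (m-1))⁻¹ * (taup * taup)
          * (t N (N-1) * (dn N (N-2) (N-m-1) * dn N (N-1) (N-m))) := by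
          simp only [mul_assoc]
      _ = (up N 2 (m-1) * up N 1 (m-1))⁻¹ * (taup * taup)
          * ((dn N (N-2) (N-m-1) * dn N (N-1) (N-m)) * t N m) := by rw [e3]
      _ = (up N 2 (m-1) * up N 1 (m-1))⁻¹ * (taup * taup)
          * (dn N (N-2) (N-m-1) * dn N (N-1) (N-m)) * t N m := by
          simp only [mul_assoc]
  have hXc := L_XCon (N := N) h1 h2
  calc XX N m * XX N (m+1)
      = XX N m * ((t N m)⁻¹ * XX N m * (t N m)⁻¹) := by rw [hXc]
    _ = (XX N m * (t N m)⁻¹ * XX N m) * (t N m)⁻¹ := by simp only [mul_assoc]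
    _ = (t N m)⁻¹ * (XX N m * (t N m)⁻¹ * XX N m) := (comm_inv_left hE).symm
    _ = ((t N m)⁻¹ * XX N m * (t N m)⁻¹) * XX N m := by simp only [mul_assoc]
    _ = XX N (m+1) * XX N m := by rw [hXc]

/-- all members of the `XX` family commute -/
lemma XX_comm : ∀ k i : ℕ, 1 ≤ i → i + k ≤ N → XX N i * XX N (i+k) = XX N (i+k) * XX N i := by
  intro k
  induction k with
  | zero => intro i _ _; rfl
  | succ k ih =>
      intro i h1 h2
      rcases Nat.eq_zero_or_pos k with rfl | hk
      · exact L_A1 hN h1 (by omega)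
      · have hXi : XX N i = t N i * XX N (i+1) * t N i := by
          rw [← L_XCon (N := N) (by omega) (by omega)]; group
        have hB1 : t N i * XX N (i+k+1) = XX N (i+k+1) * t N i :=
          L_B (by omega) (by omega) (by omega) (by omega) (by omega) (by omega)
        have ih' := ih (i+1) (by omega) (by omega)
        rw [show i+1+k = i+k+1 from by omega] at ih'
        show XX N i * XX N (i+k+1) = XX N (i+k+1) * XX N i
        calc XX N i * XX N (i+k+1)
            = t N i * XX N (i+1) * (t N i * XX N (i+k+1)) := by
              rw [hXi]; simp only [mul_assoc]
          _ = t N i * XX N (i+1) * (XX N (i+k+1) * t N i) := by rw [hB1]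
          _ = t N i * (XX N (i+1) * XX N (i+k+1)) * t N i := by simp only [mul_assoc]
          _ = t N i * (XX N (i+k+1) * XX N (i+1)) * t N i := by rw [ih']
          _ = (t N i * XX N (i+k+1)) * (XX N (i+1) * t N i) := by simp only [mul_assoc]
          _ = (XX N (i+k+1) * t N i) * (XX N (i+1) * t N i) := by rw [hB1]
          _ = XX N (i+k+1) * (t N i * XX N (i+1) * t N i) := by simp only [mul_assoc]
          _ = XX N (i+k+1) * XX N i := by rw [← hXi]

lemma XX_comm_all {i j : ℕ} (h1 : 1 ≤ i) (hi : i ≤ N) (h2 : 1 ≤ j) (hj : j ≤ N) :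
    XX N i * XX N j = XX N j * XX N i := by
  rcases Nat.le_total i j with h | h
  · have := XX_comm hN (j - i) i h1 (by omega)
    rwa [show i + (j - i) = j from by omega] at this
  · have := XX_comm hN (i - j) j h2 (by omega)
    rw [show j + (i - j) = i from by omega] at this
    exact this.symm

/-- relation R6 holds for the images -/
lemma L_D {i : ℕ} (h1 : 1 ≤ i) (h2 : i + 1 ≤ N - 1) :
    SS N * t N i = t N (i+1) * SS N := by
  have hc : up N 1 (N-1) * t N i = t N (i+1) * up N 1 (N-1) :=
    up_t_shift (by omega) (by omega) (by omega) (by omega)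
  have hy : (y N 1)⁻¹ * t N (i+1) = t N (i+1) * (y N 1)⁻¹ :=
    comm_inv_left (y1_t_comm hN (k := i+1) (by omega))
  calc (y N 1)⁻¹ * up N 1 (N-1) * t N i
      = (y N 1)⁻¹ * (up N 1 (N-1) * t N i) := by simp only [mul_assoc]
    _ = (y N 1)⁻¹ * (t N (i+1) * up N 1 (N-1)) := by rw [hc]
    _ = ((y N 1)⁻¹ * t N (i+1)) * up N 1 (N-1) := by simp only [mul_assoc]
    _ = (t N (i+1) * (y N 1)⁻¹) * up N 1 (N-1) := by rw [hy]
    _ = t N (i+1) * SS N := by rw [SS]; simp only [mul_assoc]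

/-- relation R7 holds for the images -/
lemma L_E : SS N * SS N * t N (N-1) = t N 1 * (SS N * SS N) := by
  have hsplit : up N 1 (N-1) = t N 1 * up N 2 (N-2) := by
    rw [show N-1 = (N-2)+1 from by omega, up_succ, show (1:ℕ)+1 = 2 from rfl]
  have hyup : (y N 1)⁻¹ * up N 2 (N-2) = up N 2 (N-2) * (y N 1)⁻¹ :=
    comm_inv_left (x_up_commute (x := y N 1) (a := 2) (n := N-2)
      (fun k hk1 hk2 hk3 => y1_t_comm hN (by omega)))
  have hSS : SS N * SS N
      = (y N 1)⁻¹ * (y N 2)⁻¹ * (t N 1)⁻¹ * (up N 2 (N-2) * up N 1 (N-1)) := by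
    show (y N 1)⁻¹ * up N 1 (N-1) * ((y N 1)⁻¹ * up N 1 (N-1)) = _
    calc (y N 1)⁻¹ * up N 1 (N-1) * ((y N 1)⁻¹ * up N 1 (N-1))
        = (y N 1)⁻¹ * (t N 1 * (up N 2 (N-2) * (y N 1)⁻¹)) * up N 1 (N-1) := by
          rw [hsplit]; simp only [mul_assoc]
      _ = (y N 1)⁻¹ * (t N 1 * ((y N 1)⁻¹ * up N 2 (N-2))) * up N 1 (N-1) := by
          rw [hyup]
      _ = (y N 1)⁻¹ * (t N 1 * (y N 1)⁻¹) * (up N 2 (N-2) * up N 1 (N-1)) := by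
          simp only [mul_assoc]
      _ = (y N 1)⁻¹ * ((y N 2)⁻¹ * (t N 1)⁻¹) * (up N 2 (N-2) * up N 1 (N-1)) := by
          rw [t1y1 hN]
      _ = (y N 1)⁻¹ * (y N 2)⁻¹ * (t N 1)⁻¹ * (up N 2 (N-2) * up N 1 (N-1)) := by
          simp only [mul_assoc]
  have hG4 : up N 2 (N-2) * up N 1 (N-1) * t N (N-1)
      = t N 1 * (up N 2 (N-2) * up N 1 (N-1)) := by
    have h := G1 (N := N) (a := 1) (d := N-2) (by omega) (by omega)
    rw [show (1:ℕ)+1 = 2 from rfl, show 1+(N-2) = N-1 from by omega] at h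
    have hup : up N 1 (N-1) = up N 1 (N-2) * t N (N-1) := by
      have := up_append (N := N) 1 (N-2)
      rwa [show N-2+1 = N-1 from by omega, show 1+(N-2) = N-1 from by omega] at this
    calc up N 2 (N-2) * up N 1 (N-1) * t N (N-1)
        = up N 2 (N-2) * up N 1 (N-2) * t N (N-1) * t N (N-1) := by
          rw [hup]; simp only [mul_assoc]
      _ = t N 1 * (up N 2 (N-2) * up N 1 (N-2)) * t N (N-1) := by rw [h]
      _ = t N 1 * (up N 2 (N-2) * (up N 1 (N-2) * t N (N-1))) := by simp only [mul_assoc]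
      _ = t N 1 * (up N 2 (N-2) * up N 1 (N-1)) := by rw [← hup]
  have hyy : t N 1 * ((y N 1)⁻¹ * (y N 2)⁻¹ * (t N 1)⁻¹) = (y N 1)⁻¹ * (y N 2)⁻¹ := by
    have hyc : (y N 2)⁻¹ * (y N 1)⁻¹ = (y N 1)⁻¹ * (y N 2)⁻¹ := by
      have := Yp_commute (N := N) ((1:ℕ) : ZMod N) ((2:ℕ) : ZMod N)
      have h' : y N 1 * y N 2 = y N 2 * y N 1 := this
      calc (y N 2)⁻¹ * (y N 1)⁻¹ = (y N 1 * y N 2)⁻¹ := by rw [mul_inv_rev]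
        _ = (y N 2 * y N 1)⁻¹ := by rw [h']
        _ = (y N 1)⁻¹ * (y N 2)⁻¹ := by rw [mul_inv_rev]
    calc t N 1 * ((y N 1)⁻¹ * (y N 2)⁻¹ * (t N 1)⁻¹)
        = (t N 1 * (y N 1)⁻¹) * ((y N 2)⁻¹ * (t N 1)⁻¹) := by simp only [mul_assoc]
      _ = ((y N 2)⁻¹ * (t N 1)⁻¹) * ((y N 2)⁻¹ * (t N 1)⁻¹) := by rw [t1y1 hN]
      _ = (y N 2)⁻¹ * ((t N 1)⁻¹ * (y N 2)⁻¹ * (t N 1)⁻¹) := by simp only [mul_assoc]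
      _ = (y N 2)⁻¹ * (y N 1)⁻¹ := by rw [t1invy2 hN]
      _ = (y N 1)⁻¹ * (y N 2)⁻¹ := hyc
  calc SS N * SS N * t N (N-1)
      = (y N 1)⁻¹ * (y N 2)⁻¹ * (t N 1)⁻¹
        * (up N 2 (N-2) * up N 1 (N-1) * t N (N-1)) := by
        rw [hSS]; simp only [mul_assoc]
    _ = (y N 1)⁻¹ * (y N 2)⁻¹ * (t N 1)⁻¹
        * (t N 1 * (up N 2 (N-2) * up N 1 (N-1))) := by rw [hG4]
    _ = (y N 1)⁻¹ * (y N 2)⁻¹ * (((t N 1)⁻¹ * t N 1) * (up N 2 (N-2) * up N 1 (N-1))) := by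
        simp only [mul_assoc]
    _ = (y N 1)⁻¹ * (y N 2)⁻¹ * (up N 2 (N-2) * up N 1 (N-1)) := by simp
    _ = t N 1 * ((y N 1)⁻¹ * (y N 2)⁻¹ * (t N 1)⁻¹) * (up N 2 (N-2) * up N 1 (N-1)) := by
        rw [hyy]
    _ = t N 1 * ((y N 1)⁻¹ * (y N 2)⁻¹ * (t N 1)⁻¹ * (up N 2 (N-2) * up N 1 (N-1))) := by
        simp only [mul_assoc]
    _ = t N 1 * (SS N * SS N) := by rw [← hSS]

end Main

section Main2
variable [NeZero N] (hN : 4 ≤ N)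
include hN

lemma L_Fbase : SS N * XX N 1 = XX N 2 * SS N := by
  have hsplit : up N 1 (N-1) = t N 1 * up N 2 (N-2) := by
    rw [show N-1 = (N-2)+1 from by omega, up_succ, show (1:ℕ)+1 = 2 from rfl]
  have h2 : up N 2 (N-2) * taup = taup * up N 1 (N-2) := by
    have h := up_tau_shift (N := N) (a := 2) (n := N-2) (by omega) (by omega)
    rwa [show (2:ℕ)-1 = 1 from rfl] at h
  have h3 : up N 1 (N-2) * dn N (N-1) (N-1) = dn N (N-1) (N-2) * up N 1 (N-1) := by
    have h := G3 (N := N) (a := 1) (d := N-2) (by omega) (by omega)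
    rwa [show 1+(N-2) = N-1 from by omega, show N-2+1 = N-1 from by omega] at h
  have h6 : (y N 1)⁻¹ * dn N (N-1) (N-2) = dn N (N-1) (N-2) * (y N 1)⁻¹ :=
    comm_inv_left (x_dn_commute (x := y N 1) (b := N-1) (n := N-2)
      (fun k hk1 hk2 hk3 => y1_t_comm hN (by omega)))
  have hXX2 : XX N 2 = (t N 1)⁻¹ * taup * dn N (N-1) (N-2) := by
    rw [XX, show (2:ℕ)-1 = 1 from rfl, up_one]
  have hM : SS N * XX N 1
      = (y N 1)⁻¹ * t N 1 * taup * (dn N (N-1) (N-2) * up N 1 (N-1)) := by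
    rw [XX_one, SS]
    calc (y N 1)⁻¹ * up N 1 (N-1) * (taup * dn N (N-1) (N-1))
        = (y N 1)⁻¹ * (t N 1 * (up N 2 (N-2) * taup)) * dn N (N-1) (N-1) := by
          rw [hsplit]; simp only [mul_assoc]
      _ = (y N 1)⁻¹ * (t N 1 * (taup * up N 1 (N-2))) * dn N (N-1) (N-1) := by rw [h2]
      _ = (y N 1)⁻¹ * t N 1 * taup * (up N 1 (N-2) * dn N (N-1) (N-1)) := by
          simp only [mul_assoc]
      _ = (y N 1)⁻¹ * t N 1 * taup * (dn N (N-1) (N-2) * up N 1 (N-1)) := by rw [h3]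
  have hM2 : XX N 2 * SS N
      = (y N 1)⁻¹ * t N 1 * taup * (dn N (N-1) (N-2) * up N 1 (N-1)) := by
    rw [hXX2, SS]
    calc (t N 1)⁻¹ * taup * dn N (N-1) (N-2) * ((y N 1)⁻¹ * up N 1 (N-1))
        = (t N 1)⁻¹ * taup * (dn N (N-1) (N-2) * (y N 1)⁻¹) * up N 1 (N-1) := by
          simp only [mul_assoc]
      _ = (t N 1)⁻¹ * taup * ((y N 1)⁻¹ * dn N (N-1) (N-2)) * up N 1 (N-1) := by
          rw [h6]
      _ = (t N 1)⁻¹ * (taup * (y N 1)⁻¹) * (dn N (N-1) (N-2) * up N 1 (N-1)) := by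
          simp only [mul_assoc]
      _ = (t N 1)⁻¹ * ((y N 2)⁻¹ * taup) * (dn N (N-1) (N-2) * up N 1 (N-1)) := by
          rw [tau_y1inv hN]
      _ = ((t N 1)⁻¹ * (y N 2)⁻¹) * taup * (dn N (N-1) (N-2) * up N 1 (N-1)) := by
          simp only [mul_assoc]
      _ = ((y N 1)⁻¹ * t N 1) * taup * (dn N (N-1) (N-2) * up N 1 (N-1)) := by
          rw [y1t1 hN]
  rw [hM, hM2]

lemma L_F : ∀ j : ℕ, 1 ≤ j → j ≤ N - 1 → SS N * XX N j = XX N (j+1) * SS N := by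
  intro j
  induction j with
  | zero => omega
  | succ j ih =>
      intro h1 h2
      rcases Nat.eq_zero_or_pos j with rfl | hj
      · exact L_Fbase hN
      · have hXj : XX N (j+1) = (t N j)⁻¹ * XX N j * (t N j)⁻¹ :=
          (L_XCon (N := N) (by omega) (by omega)).symm
        have hD : SS N * t N j = t N (j+1) * SS N := L_D hN (by omega) (by omega)
        have hD' : SS N * (t N j)⁻¹ = (t N (j+1))⁻¹ * SS N := (inv_swap hD).symm
        have ihj := ih (by omega) (by omega)
        have hXj2 : XX N (j+2) = (t N (j+1))⁻¹ * XX N (j+1) * (t N (j+1))⁻¹ :=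
          (L_XCon (N := N) (by omega) (by omega)).symm
        calc SS N * XX N (j+1)
            = (SS N * (t N j)⁻¹) * XX N j * (t N j)⁻¹ := by
              rw [hXj]; simp only [mul_assoc]
          _ = ((t N (j+1))⁻¹ * SS N) * XX N j * (t N j)⁻¹ := by rw [hD']
          _ = (t N (j+1))⁻¹ * (SS N * XX N j) * (t N j)⁻¹ := by simp only [mul_assoc]
          _ = (t N (j+1))⁻¹ * (XX N (j+1) * SS N) * (t N j)⁻¹ := by rw [ihj]
          _ = (t N (j+1))⁻¹ * XX N (j+1) * (SS N * (t N j)⁻¹) := by simp only [mul_assoc]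
          _ = (t N (j+1))⁻¹ * XX N (j+1) * ((t N (j+1))⁻¹ * SS N) := by rw [hD']
          _ = ((t N (j+1))⁻¹ * XX N (j+1) * (t N (j+1))⁻¹) * SS N := by
              simp only [mul_assoc]
          _ = XX N (j+2) * SS N := by rw [← hXj2]

end Main2

section Hom
variable [NeZero N]

/-- generator images of the Fourier transform -/
def phiF (N : ℕ) : TGen N → PresentedGroup (trels N)
  | Sum.inl none => SS N
  | Sum.inl (some i) => t N ((i : ℕ)+1)
  | Sum.inr p => XX N (if p.val = 0 then N else p.val)

lemma phiF_T (i : Fin (N-1)) : phiF N (Sum.inl (some i)) = t N ((i : ℕ)+1) := rfl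
lemma phiF_tau : phiF N (Sum.inl none) = SS N := rfl

lemma phiF_Y {j : ℕ} (h1 : 1 ≤ j) (h2 : j ≤ N) :
    phiF N (Sum.inr ((j : ℕ) : ZMod N)) = XX N j := by
  rcases Nat.lt_or_ge j N with hj | hj
  · have hv : ((j : ℕ) : ZMod N).val = j := ZMod.val_cast_of_lt hj
    simp [phiF, hv, Nat.pos_iff_ne_zero.mp h1]
  · have hjN : j = N := by omega
    have hv : ((j : ℕ) : ZMod N) = 0 := by
      rw [hjN]; exact ZMod.natCast_self N
    rw [hv, hjN]
    simp [phiF]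

lemma rep_Y (p : ZMod N) : ∃ j : ℕ, 1 ≤ j ∧ j ≤ N ∧ p = ((j : ℕ) : ZMod N) ∧
    phiF N (Sum.inr p) = XX N j := by
  by_cases h0 : p.val = 0
  · refine ⟨N, by have := Nat.pos_of_ne_zero (NeZero.ne N); omega, le_rfl, ?_, ?_⟩
    · rw [ZMod.natCast_self]
      exact ((ZMod.val_eq_zero p).mp h0)
    · simp [phiF, h0]
  · refine ⟨p.val, by omega, le_of_lt (ZMod.val_lt p), ?_, ?_⟩
    · exact (ZMod.natCast_rightInverse p).symm
    · simp [phiF, h0]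

lemma phi_rels (hN : 4 ≤ N) : ∀ r ∈ trels N, FreeGroup.lift (phiF N) r = 1 := by
  intro r hr
  rcases hr with ⟨i, j, hcond, rfl⟩ | ⟨i, j, hcond, rfl⟩ | ⟨p, q, rfl⟩ |
    ⟨i, p, hp1, hp2, rfl⟩ | ⟨i, rfl⟩ | ⟨i, j, hcond, rfl⟩ | ⟨i, j, hc1, hc2, rfl⟩ | ⟨i, rfl⟩
  · -- far commutation
    simp only [Tf, map_mul, map_inv, FreeGroup.lift_apply_of, phiF_T]
    have hc : t N ((i:ℕ)+1) * t N ((j:ℕ)+1) = t N ((j:ℕ)+1) * t N ((i:ℕ)+1) := by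
      rcases hcond with h | h
      · exact t_commute (Or.inl (by omega))
      · exact t_commute (Or.inr (by omega))
    rw [hc]; group
  · -- braid
    simp only [Tf, map_mul, map_inv, FreeGroup.lift_apply_of, phiF_T]
    rcases hcond with h | h
    · have hb := t_braid (N := N) (i := (i:ℕ)+1) (by omega)
        (by have := j.isLt; omega)
      rw [h, show (i:ℕ)+1+1 = (i:ℕ)+2 from rfl] at *
      rw [show ((i:ℕ)+1)+1 = (i:ℕ)+2 from rfl] at hb
      rw [hb]; group
    · have hb := t_braid (N := N) (i := (j:ℕ)+1) (by omega)
        (by have := i.isLt; omega)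
      rw [h, show ((j:ℕ)+1)+1 = (j:ℕ)+2 from rfl] at *
      rw [show ((j:ℕ)+1)+1 = (j:ℕ)+2 from rfl] at hb
      rw [← hb]; group
  · -- Y commutation
    simp only [Yf, map_mul, map_inv, FreeGroup.lift_apply_of]
    obtain ⟨a, ha1, ha2, hpa, hfa⟩ := rep_Y p
    obtain ⟨b, hb1, hb2, hpb, hfb⟩ := rep_Y q
    rw [hfa, hfb, XX_comm_all hN ha1 ha2 hb1 hb2]; group
  · -- T-Y commutation
    simp only [Tf, Yf, map_mul, map_inv, FreeGroup.lift_apply_of, phiF_T]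
    obtain ⟨a, ha1, ha2, hpa, hfa⟩ := rep_Y p
    have hne1 : a ≠ (i:ℕ)+1 := fun h => hp1 (by rw [hpa, h])
    have hne2 : a ≠ (i:ℕ)+2 := fun h => hp2 (by rw [hpa, h])
    rw [hfa, L_B (by omega) (by have := i.isLt; omega) ha1 ha2 hne1 (by omega)]
    group
  · -- T⁻¹ Y T⁻¹ = Y'
    simp only [Tf, Yf, map_mul, map_inv, FreeGroup.lift_apply_of, phiF_T]
    rw [phiF_Y (by omega) (by have := i.isLt; omega),
      show ((i:ℕ)+2 : ℕ) = ((i:ℕ)+1)+1 from rfl,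
      phiF_Y (by omega) (by have := i.isLt; omega)]
    rw [← L_XCon (N := N) (j := (i:ℕ)+1) (by omega) (by have := i.isLt; omega)]
    group
  · -- τ T τ⁻¹ = T'
    simp only [Tf, tauf, map_mul, map_inv, FreeGroup.lift_apply_of, phiF_T, phiF_tau]
    rw [hcond]
    rw [L_D hN (by omega) (by have := j.isLt; omega)]
    group
  · -- τ² T_{N-1} τ⁻² = T_1
    simp only [Tf, tauf, map_mul, map_inv, FreeGroup.lift_apply_of, phiF_T, phiF_tau]
    rw [hc1, hc2, show N-2+1 = N-1 from by omega, show (0:ℕ)+1 = 1 from rfl]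
    have h := L_E hN
    calc SS N * SS N * t N (N-1) * (SS N)⁻¹ * (SS N)⁻¹ * (t N 1)⁻¹
        = t N 1 * (SS N * SS N) * (SS N)⁻¹ * (SS N)⁻¹ * (t N 1)⁻¹ := by rw [h]
      _ = 1 := by group
  · -- τ Y τ⁻¹ = Y'
    simp only [Yf, tauf, map_mul, map_inv, FreeGroup.lift_apply_of, phiF_tau]
    rw [phiF_Y (by omega) (by have := i.isLt; omega),
      show ((i:ℕ)+2 : ℕ) = ((i:ℕ)+1)+1 from rfl,
      phiF_Y (by omega) (by have := i.isLt; omega)]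
    rw [L_F hN ((i:ℕ)+1) (by omega) (by have := i.isLt; omega)]
    group

/-- The Fourier endomorphism. -/
def PhiHom (hN : 4 ≤ N) : PresentedGroup (trels N) →* PresentedGroup (trels N) :=
  PresentedGroup.toGroup (phi_rels hN)

end Hom

section Del
variable [NeZero N]

/-- generator images of the inversion involution δ -/
def delF (N : ℕ) : TGen N → PresentedGroup (trels N)
  | Sum.inl none => taup
  | Sum.inl (some i) => (t N ((i : ℕ)+1))⁻¹
  | Sum.inr p => (Yp p)⁻¹

lemma delF_T (i : Fin (N-1)) : delF N (Sum.inl (some i)) = (t N ((i : ℕ)+1))⁻¹ := rfl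
lemma delF_tau : delF N (Sum.inl none) = taup (N := N) := rfl
lemma delF_Y (p : ZMod N) : delF N (Sum.inr p) = (Yp p)⁻¹ := rfl

lemma del_rels (hN : 4 ≤ N) : ∀ r ∈ trels N, FreeGroup.lift (delF N) r = 1 := by
  intro r hr
  rcases hr with ⟨i, j, hcond, rfl⟩ | ⟨i, j, hcond, rfl⟩ | ⟨p, q, rfl⟩ |
    ⟨i, p, hp1, hp2, rfl⟩ | ⟨i, rfl⟩ | ⟨i, j, hcond, rfl⟩ | ⟨i, j, hc1, hc2, rfl⟩ | ⟨i, rfl⟩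
  · simp only [Tf, map_mul, map_inv, FreeGroup.lift_apply_of, delF_T]
    have hc : t N ((i:ℕ)+1) * t N ((j:ℕ)+1) = t N ((j:ℕ)+1) * t N ((i:ℕ)+1) := by
      rcases hcond with h | h
      · exact t_commute (Or.inl (by omega))
      · exact t_commute (Or.inr (by omega))
    have hc' : (t N ((i:ℕ)+1))⁻¹ * (t N ((j:ℕ)+1))⁻¹
        = (t N ((j:ℕ)+1))⁻¹ * (t N ((i:ℕ)+1))⁻¹ :=
      comm_inv_left (comm_inv_right hc)
    rw [hc']; group
  · simp only [Tf, map_mul, map_inv, FreeGroup.lift_apply_of, delF_T]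
    rcases hcond with h | h
    · have hb := t_braid (N := N) (i := (i:ℕ)+1) (by omega) (by have := j.isLt; omega)
      rw [h, show (i:ℕ)+1+1 = (i:ℕ)+2 from rfl] at *
      rw [show ((i:ℕ)+1)+1 = (i:ℕ)+2 from rfl] at hb
      have hb' : (t N ((i:ℕ)+2))⁻¹ * (t N ((i:ℕ)+1))⁻¹ * (t N ((i:ℕ)+2))⁻¹
          = (t N ((i:ℕ)+1))⁻¹ * (t N ((i:ℕ)+2))⁻¹ * (t N ((i:ℕ)+1))⁻¹ := by
        calc (t N ((i:ℕ)+2))⁻¹ * (t N ((i:ℕ)+1))⁻¹ * (t N ((i:ℕ)+2))⁻¹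
            = (t N ((i:ℕ)+2) * t N ((i:ℕ)+1) * t N ((i:ℕ)+2))⁻¹ := by group
          _ = (t N ((i:ℕ)+1) * t N ((i:ℕ)+2) * t N ((i:ℕ)+1))⁻¹ := by rw [hb]
          _ = (t N ((i:ℕ)+1))⁻¹ * (t N ((i:ℕ)+2))⁻¹ * (t N ((i:ℕ)+1))⁻¹ := by group
      rw [hb']; group
    · have hb := t_braid (N := N) (i := (j:ℕ)+1) (by omega) (by have := i.isLt; omega)
      rw [h, show (j:ℕ)+1+1 = (j:ℕ)+2 from rfl] at *
      rw [show ((j:ℕ)+1)+1 = (j:ℕ)+2 from rfl] at hb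
      have hb' : (t N ((j:ℕ)+1))⁻¹ * (t N ((j:ℕ)+2))⁻¹ * (t N ((j:ℕ)+1))⁻¹
          = (t N ((j:ℕ)+2))⁻¹ * (t N ((j:ℕ)+1))⁻¹ * (t N ((j:ℕ)+2))⁻¹ := by
        calc (t N ((j:ℕ)+1))⁻¹ * (t N ((j:ℕ)+2))⁻¹ * (t N ((j:ℕ)+1))⁻¹
            = (t N ((j:ℕ)+1) * t N ((j:ℕ)+2) * t N ((j:ℕ)+1))⁻¹ := by group
          _ = (t N ((j:ℕ)+2) * t N ((j:ℕ)+1) * t N ((j:ℕ)+2))⁻¹ := by rw [← hb]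
          _ = (t N ((j:ℕ)+2))⁻¹ * (t N ((j:ℕ)+1))⁻¹ * (t N ((j:ℕ)+2))⁻¹ := by group
      rw [hb']; group
  · simp only [Yf, map_mul, map_inv, FreeGroup.lift_apply_of, delF_Y]
    have hc := Yp_commute (N := N) p q
    have hc' : (Yp p)⁻¹ * (Yp q)⁻¹ = (Yp q)⁻¹ * (Yp p)⁻¹ :=
      comm_inv_left (comm_inv_right hc)
    rw [hc']; group
  · simp only [Tf, Yf, map_mul, map_inv, FreeGroup.lift_apply_of, delF_T, delF_Y]
    have hp2' : p ≠ ((((i:ℕ)+1)+1 : ℕ) : ZMod N) := by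
      rwa [show ((i:ℕ)+1)+1 = (i:ℕ)+2 from rfl]
    have hc := tY_commute (N := N) (i := (i:ℕ)+1) (by omega)
      (by have := i.isLt; omega) hp1 hp2'
    have hc' : (t N ((i:ℕ)+1))⁻¹ * (Yp p)⁻¹ = (Yp p)⁻¹ * (t N ((i:ℕ)+1))⁻¹ :=
      comm_inv_left (comm_inv_right hc)
    rw [hc']; group
  · simp only [Tf, Yf, map_mul, map_inv, FreeGroup.lift_apply_of, delF_T, delF_Y]
    rw [show (Yp ((((i:ℕ)+1 : ℕ)) : ZMod N) : PresentedGroup (trels N))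
        = y N ((i:ℕ)+1) from rfl,
      show (Yp ((((i:ℕ)+2 : ℕ)) : ZMod N) : PresentedGroup (trels N))
        = y N ((i:ℕ)+2) from rfl,
      show (i:ℕ)+2 = ((i:ℕ)+1)+1 from rfl,
      ← tYt (N := N) (i := (i:ℕ)+1) (by omega) (by have := i.isLt; omega)]
    group
  · simp only [Tf, tauf, map_mul, map_inv, FreeGroup.lift_apply_of, delF_T, delF_tau]
    rw [hcond]
    rw [← tau_t (N := N) (i := (i:ℕ)+1) (by omega) (by have := j.isLt; omega)]
    group
  · simp only [Tf, tauf, map_mul, map_inv, FreeGroup.lift_apply_of, delF_T, delF_tau]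
    rw [hc1, hc2, show N-2+1 = N-1 from by omega, show (0:ℕ)+1 = 1 from rfl,
      ← tau_t_top hN]
    group
  · simp only [Yf, tauf, map_mul, map_inv, FreeGroup.lift_apply_of, delF_Y, delF_tau]
    rw [show (Yp ((((i:ℕ)+1 : ℕ)) : ZMod N) : PresentedGroup (trels N))
        = y N ((i:ℕ)+1) from rfl,
      show (Yp ((((i:ℕ)+2 : ℕ)) : ZMod N) : PresentedGroup (trels N))
        = y N ((i:ℕ)+2) from rfl,
      show (i:ℕ)+2 = ((i:ℕ)+1)+1 from rfl,
      ← tau_y (N := N) (j := (i:ℕ)+1) (by omega) (by have := i.isLt; omega)]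
    group

/-- The inversion involution δ as an endomorphism. -/
def DelHom (hN : 4 ≤ N) : PresentedGroup (trels N) →* PresentedGroup (trels N) :=
  PresentedGroup.toGroup (del_rels hN)

end Del

section Assemble
variable [NeZero N] (hN : 4 ≤ N)

lemma rep_Y' (p : ZMod N) : ∃ j : ℕ, 1 ≤ j ∧ j ≤ N ∧ p = ((j : ℕ) : ZMod N) := by
  obtain ⟨j, h1, h2, h3, _⟩ := rep_Y p
  exact ⟨j, h1, h2, h3⟩

lemma Phi_tau : PhiHom hN taup = SS N := PresentedGroup.toGroup.of _

lemma Phi_t (k : ℕ) : PhiHom hN (t N k) = t N k := by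
  by_cases h : 1 ≤ k ∧ k ≤ N - 1
  · have hk : k - 1 < N - 1 := by omega
    rw [t_of_range h.1 h.2 hk]
    show PhiHom hN (PresentedGroup.of (Sum.inl (some ⟨k-1, hk⟩))) = _
    rw [PhiHom, PresentedGroup.toGroup.of]
    show t N ((k-1)+1) = _
    rw [show k-1+1 = k from by omega, t_of_range h.1 h.2 hk]
  · rw [t_eq_one (by omega)]
    simp

lemma Phi_y {j : ℕ} (h1 : 1 ≤ j) (h2 : j ≤ N) : PhiHom hN (y N j) = XX N j := by
  show PhiHom hN (PresentedGroup.of (Sum.inr ((j : ℕ) : ZMod N))) = _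
  rw [PhiHom, PresentedGroup.toGroup.of, phiF_Y h1 h2]

lemma Del_tau : DelHom hN taup = taup := PresentedGroup.toGroup.of _

lemma Del_Yp (p : ZMod N) : DelHom hN (Yp p) = (Yp p)⁻¹ := PresentedGroup.toGroup.of _

lemma Del_y (j : ℕ) : DelHom hN (y N j) = (y N j)⁻¹ := Del_Yp hN _

lemma Del_t (k : ℕ) : DelHom hN (t N k) = (t N k)⁻¹ := by
  by_cases h : 1 ≤ k ∧ k ≤ N - 1
  · have hk : k - 1 < N - 1 := by omega
    rw [t_of_range h.1 h.2 hk]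
    show DelHom hN (PresentedGroup.of (Sum.inl (some ⟨k-1, hk⟩))) = _
    rw [DelHom, PresentedGroup.toGroup.of]
    show (t N ((k-1)+1))⁻¹ = _
    rw [show k-1+1 = k from by omega, t_of_range h.1 h.2 hk]
  · rw [t_eq_one (by omega)]
    simp

lemma hom_up {f : PresentedGroup (trels N) →* PresentedGroup (trels N)}
    (hf : ∀ k, f (t N k) = t N k) (a n : ℕ) : f (up N a n) = up N a n := by
  induction n generalizing a with
  | zero => simp
  | succ n ih => rw [up_succ, map_mul, hf, ih]

lemma hom_dn {f : PresentedGroup (trels N) →* PresentedGroup (trels N)}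
    (hf : ∀ k, f (t N k) = t N k) (b n : ℕ) : f (dn N b n) = dn N b n := by
  induction n generalizing b with
  | zero => simp
  | succ n ih => rw [dn_succ, map_mul, hf, ih]

lemma Del_up {a n : ℕ} (h1 : 1 ≤ a) : DelHom hN (up N a n) = (dn N (a+n-1) n)⁻¹ := by
  induction n generalizing a with
  | zero => simp
  | succ n ih =>
      rw [up_succ, map_mul, Del_t, ih (by omega)]
      rw [show a+1+n-1 = a+n from by omega]
      have hd : dn N (a+n) (n+1) = dn N (a+n) n * t N a := by
        have := dn_append (N := N) (a+n) n (by omega)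
        rwa [show a+n-n = a from by omega] at this
      rw [show a+(n+1)-1 = a+n from by omega, hd, mul_inv_rev]

lemma Del_dn {b n : ℕ} (h : n ≤ b) : DelHom hN (dn N b n) = (up N (b-n+1) n)⁻¹ := by
  induction n generalizing b with
  | zero => simp
  | succ n ih =>
      rw [dn_succ, map_mul, Del_t, ih (by omega)]
      rw [show b-1-n+1 = b-n from by omega]
      have hu : up N (b-n) (n+1) = up N (b-n) n * t N b := by
        have := up_append (N := N) (b-n) n
        rwa [show b-n+n = b from by omega] at this
      rw [show b-(n+1)+1 = b-n from by omega, hu, mul_inv_rev]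

/-- The inverse Fourier transform `δ ∘ Φ ∘ δ`. -/
def PsiHom (hN : 4 ≤ N) : PresentedGroup (trels N) →* PresentedGroup (trels N) :=
  (DelHom hN).comp ((PhiHom hN).comp (DelHom hN))

lemma Psi_t (k : ℕ) : PsiHom hN (t N k) = t N k := by
  rw [PsiHom, MonoidHom.comp_apply, MonoidHom.comp_apply, Del_t, map_inv, Phi_t,
    map_inv, Del_t]
  group

lemma Psi_tau : PsiHom hN taup = y N 1 * (dn N (N-1) (N-1))⁻¹ := by
  rw [PsiHom, MonoidHom.comp_apply, MonoidHom.comp_apply, Del_tau, Phi_tau, SS,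
    map_mul, map_inv, Del_y, inv_inv]
  congr 1
  rw [Del_up hN (by omega), show 1+(N-1)-1 = N-1 from by omega]

lemma Psi_y1 : PsiHom hN (y N 1) = up N 1 (N-1) * taup⁻¹ := by
  rw [PsiHom, MonoidHom.comp_apply, MonoidHom.comp_apply, Del_y, map_inv,
    Phi_y hN (by omega) (by omega), XX_one, map_inv, map_mul, Del_tau,
    Del_dn hN (by omega), show N-1-(N-1)+1 = 1 from by omega]
  group

lemma PP_tau : PhiHom hN (PsiHom hN taup) = taup := by
  rw [Psi_tau, map_mul, map_inv, Phi_y hN (by omega) (by omega), XX_one,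
    hom_dn (Phi_t hN)]
  group

lemma PP_y1 : PhiHom hN (PsiHom hN (y N 1)) = y N 1 := by
  rw [Psi_y1, map_mul, map_inv, Phi_tau, SS, hom_up (Phi_t hN)]
  group

lemma QQ_tau : PsiHom hN (PhiHom hN taup) = taup := by
  rw [Phi_tau, SS, map_mul, map_inv, Psi_y1, hom_up (Psi_t hN)]
  group

lemma QQ_y1 : PsiHom hN (PhiHom hN (y N 1)) = y N 1 := by
  rw [Phi_y hN (by omega) (by omega), XX_one, map_mul, Psi_tau,
    hom_dn (Psi_t hN)]
  group

lemma comp_gen (F : PresentedGroup (trels N) →* PresentedGroup (trels N))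
    (hT : ∀ k, F (t N k) = t N k) (hτ : F taup = taup) (hy1 : F (y N 1) = y N 1) :
    ∀ x : TGen N, F (PresentedGroup.of x) = PresentedGroup.of x := by
  have hy : ∀ j : ℕ, 1 ≤ j → j ≤ N → F (y N j) = y N j := by
    intro j
    induction j with
    | zero => omega
    | succ j ih =>
        intro h1 h2
        rcases Nat.eq_zero_or_pos j with rfl | hj
        · exact hy1
        · have hr : y N (j+1) = (t N j)⁻¹ * y N j * (t N j)⁻¹ :=
            (tYt (by omega) (by omega)).symm
          rw [hr, map_mul, map_mul, map_inv, hT, ih (by omega) (by omega)]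
  intro x
  rcases x with (_ | i) | p
  · exact hτ
  · have : (PresentedGroup.of (Sum.inl (some i)) : PresentedGroup (trels N))
        = t N ((i:ℕ)+1) := Tp_eq_t i
    rw [this, hT]
  · obtain ⟨j, h1, h2, rfl⟩ := rep_Y' p
    exact hy j h1 h2

lemma PhiPsi_id : (PhiHom hN).comp (PsiHom hN) = MonoidHom.id _ := by
  apply PresentedGroup.ext
  intro x
  have := comp_gen ((PhiHom hN).comp (PsiHom hN))
    (fun k => by rw [MonoidHom.comp_apply, Psi_t, Phi_t])
    (by rw [MonoidHom.comp_apply]; exact PP_tau hN)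
    (by rw [MonoidHom.comp_apply]; exact PP_y1 hN)
  rw [this x, MonoidHom.id_apply]

lemma PsiPhi_id : (PsiHom hN).comp (PhiHom hN) = MonoidHom.id _ := by
  apply PresentedGroup.ext
  intro x
  have := comp_gen ((PsiHom hN).comp (PhiHom hN))
    (fun k => by rw [MonoidHom.comp_apply, Phi_t, Psi_t])
    (by rw [MonoidHom.comp_apply]; exact QQ_tau hN)
    (by rw [MonoidHom.comp_apply]; exact QQ_y1 hN)
  rw [this x, MonoidHom.id_apply]

/-- The Fourier transform as a `MulEquiv`. -/
def PhiEquiv (hN : 4 ≤ N) : PresentedGroup (trels N) ≃* PresentedGroup (trels N) :=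
  { toFun := PhiHom hN
    invFun := PsiHom hN
    left_inv := fun x => DFunLike.congr_fun (PsiPhi_id hN) x
    right_inv := fun x => DFunLike.congr_fun (PhiPsi_id hN) x
    map_mul' := map_mul _ }

end Assemble
section Lists
variable [NeZero N]

lemma listA : ∀ m : ℕ, ((List.range m).map (fun k => (Tg N (m - 1 - k))⁻¹)).prod
    = (up N 1 m)⁻¹ := by
  intro m
  induction m with
  | zero => simp
  | succ m ih =>
      rw [List.range_succ_eq_map]
      simp only [List.map_cons, List.map_map, List.prod_cons]
      have hfun : ((fun k => (Tg N (m + 1 - 1 - k))⁻¹) ∘ Nat.succ)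
          = (fun k => (Tg N (m - 1 - k))⁻¹) := by
        funext k
        show (Tg N (m + 1 - 1 - (k+1)))⁻¹ = (Tg N (m - 1 - k))⁻¹
        rw [show m + 1 - 1 - (k+1) = m - 1 - k from by omega]
      rw [hfun, ih, show m + 1 - 1 - 0 = m from by omega]
      have hu : up N 1 (m+1) = up N 1 m * t N (m+1) := by
        have := up_append (N := N) 1 m
        rwa [show 1+m = m+1 from by omega] at this
      rw [hu, mul_inv_rev, t_succ]

lemma listB : ∀ n : ℕ, n ≤ N - 1 →
    ((List.range n).map (fun k => Tg N (N - 2 - k))).prod = dn N (N-1) n := by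
  intro n
  induction n with
  | zero => simp
  | succ n ih =>
      intro h
      rw [List.range_succ, List.map_append, List.prod_append, ih (by omega)]
      simp only [List.map_cons, List.map_nil, List.prod_cons, List.prod_nil, mul_one]
      rw [dn_append (N := N) (N-1) n (by omega)]
      congr 1
      rw [show N-1-n = (N-2-n)+1 from by omega, t_succ]

lemma listC : ∀ m : ℕ, ((List.range m).map (Tg N)).prod = up N 1 m := by
  intro m
  induction m with
  | zero => simp
  | succ m ih =>
      rw [List.range_succ, List.map_append, List.prod_append, ih]
      simp only [List.map_cons, List.map_nil, List.prod_cons, List.prod_nil, mul_one]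
      have hu : up N 1 (m+1) = up N 1 m * t N (m+1) := by
        have := up_append (N := N) 1 m
        rwa [show 1+m = m+1 from by omega] at this
      rw [hu, t_succ]

end Lists
end Aux


/-- The toroidal braid group `B̂_N` admits an automorphism `Φ` (the Fourier transform)
with `Φ(T̂_i) = T̂_i`, `Φ(Ŷ_j) = T̂_{j-1}⁻¹ ⋯ T̂_1⁻¹ τ̂ T̂_{N-1} ⋯ T̂_j` for
`j = 1,…,N-1`, and `Φ(τ̂) = Ŷ_1⁻¹ T̂_1 ⋯ T̂_{N-1}`. -/
theorem stmt8 (N : ℕ) [NeZero N] (hN : 4 ≤ N) :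
    ∃ Φ : PresentedGroup (trels N) ≃* PresentedGroup (trels N),
      (∀ i : Fin (N - 1), Φ (Tp i) = Tp i) ∧
      (∀ j : Fin (N - 1),
        Φ (Yp (((j : ℕ) + 1 : ℕ) : ZMod N))
          = (((List.range (j : ℕ)).map (fun k => (Tg N ((j : ℕ) - 1 - k))⁻¹)).prod) *
            taup *
            (((List.range (N - 1 - (j : ℕ))).map (fun k => Tg N (N - 2 - k))).prod)) ∧
      Φ taup = (Yp ((1 : ℕ) : ZMod N))⁻¹ * ((List.range (N - 1)).map (Tg N)).prod := by
  refine ⟨PhiEquiv hN, ?_, ?_, ?_⟩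
  · intro i
    show PhiHom hN (Tp i) = Tp i
    rw [Tp_eq_t i, Phi_t hN]
  · intro j
    show PhiHom hN (Yp (((j : ℕ) + 1 : ℕ) : ZMod N)) = _
    have h1 : ((j:ℕ)+1 : ℕ) ≤ N := by have := j.isLt; omega
    have hphi : PhiHom hN (Yp ((((j:ℕ) + 1 : ℕ)) : ZMod N)) = XX N ((j:ℕ)+1) :=
      Phi_y hN (by omega) h1
    rw [hphi, listA, listB (N - 1 - (j:ℕ)) (by omega), XX,
      show (j:ℕ)+1-1 = (j:ℕ) from by omega,
      show N-((j:ℕ)+1) = N-1-(j:ℕ) from by omega]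
  · show PhiHom hN taup = _
    rw [Phi_tau hN, listC, SS]
    rfl


end Stmt8
end
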